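/- arXiv:1605.04673 — 9 statements merged into one kernel-verified Lean document; each statement's English description precedes it below -/
import Mathlib

section
/- Let α > 0, t > 0 and M a positive integer. Then the double integral over D₁ = {(x,y) : x ≥ y ≥ M} of e^{-α(x²+y²)π² t} dx dy is strictly less than (1/(4 M² π⁴ α² t²)) e^{-2 α M² π² t}. -/
/-!
Write `c = απ²t`. On `D₁ = {M ≤ y ≤ x}` we have `xy / M² ≥ 1`, so the Gaussian `e^{-c(x²+y²)}`
is dominated by `(x e^{-cx²}) (y e^{-cy²}) / M²`. Since `D₁ ⊆ [M, ∞)²`, the integral of the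
dominating function over `D₁` is at most its integral over the quadrant, which factors as
`(∫_M^∞ x e^{-cx²} dx)² / M² = (e^{-cM²} / (2c))² / M²`. The inequality is strict because the
quadrant minus `D₁` has positive measure and the dominating function is positive there.
-/

open Real Set MeasureTheory Filter Topology

theorem integral_Ioi_mul_exp_neg_mul_sq {c : ℝ} (hc : 0 < c) (a : ℝ) :
    ∫ x in Ioi a, x * exp (-c * x ^ 2) = exp (-c * a ^ 2) / (2 * c) := by
  have hderiv : ∀ x ∈ Ici a,
      HasDerivAt (fun x => -exp (-c * x ^ 2) / (2 * c)) (x * exp (-c * x ^ 2)) x := by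
    intro x _
    refine (((hasDerivAt_pow 2 x).const_mul (-c)).exp.fun_neg.div_const (2 * c)).congr_deriv ?_
    push_cast
    field_simp
  have hlim : Tendsto (fun x => -exp (-c * x ^ 2) / (2 * c)) atTop (𝓝 0) := by
    have hexp : Tendsto (fun x : ℝ => -c * x ^ 2) atTop atBot :=
      (tendsto_pow_atTop two_ne_zero).const_mul_atTop_of_neg (neg_neg_of_pos hc)
    simpa using ((tendsto_exp_atBot.comp hexp).neg.div_const (2 * c))
  rw [integral_Ioi_of_hasDerivAt_of_tendsto' hderiv
    (integrable_mul_exp_neg_mul_sq hc).integrableOn hlim]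
  ring

theorem setIntegral_lt_setIntegral_of_subset {X : Type*} [MeasurableSpace X] {μ : Measure X}
    {f : X → ℝ} {s t : Set X} (hs : MeasurableSet s) (ht : MeasurableSet t) (hst : s ⊆ t)
    (hf : IntegrableOn f t μ) (hpos : ∀ x ∈ t \ s, 0 < f x) (hμ : 0 < μ (t \ s)) :
    ∫ x in s, f x ∂μ < ∫ x in t, f x ∂μ := by
  have hdiff : 0 < ∫ x in t \ s, f x ∂μ := by
    rw [setIntegral_pos_iff_support_of_nonneg_ae
      (ae_restrict_of_forall_mem (ht.diff hs) fun x hx => (hpos x hx).le) (hf.mono_set sdiff_subset)]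
    exact hμ.trans_le (measure_mono fun x hx => ⟨(hpos x hx).ne', hx⟩)
  rw [setIntegral_sdiff hs hf hst] at hdiff
  linarith

def wedge (a : ℝ) : Set (ℝ × ℝ) := {p | a ≤ p.2 ∧ p.2 ≤ p.1}

theorem measurableSet_wedge (a : ℝ) : MeasurableSet (wedge a) :=
  (measurableSet_le measurable_const measurable_snd).inter
    (measurableSet_le measurable_snd measurable_fst)

theorem wedge_subset_Ici_prod_Ici (a : ℝ) : wedge a ⊆ Ici a ×ˢ Ici a :=
  fun _ ⟨hy, hyx⟩ => ⟨hy.trans hyx, hy⟩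

theorem volume_Ici_prod_Ici_diff_wedge_pos (a : ℝ) :
    0 < volume (Ici a ×ˢ Ici a \ wedge a) := by
  have hsub : Ioo a (a + 1) ×ˢ Ioi (a + 1) ⊆ Ici a ×ˢ Ici a \ wedge a := by
    rintro ⟨x, y⟩ ⟨⟨hax : a < x, hx : x < a + 1⟩, hy : a + 1 < y⟩
    exact ⟨⟨hax.le, (by linarith : a ≤ y)⟩, fun hw => by linarith [hw.2]⟩
  refine lt_of_lt_of_le ?_ (measure_mono hsub)
  rw [Measure.volume_eq_prod, Measure.prod_prod, Real.volume_Ioo, Real.volume_Ioi]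
  simp

theorem exp_neg_mul_sq_add_sq_le {c a x y : ℝ} (ha : 0 < a) (hy : a ≤ y) (hyx : y ≤ x) :
    exp (-c * (x ^ 2 + y ^ 2)) ≤ x * exp (-c * x ^ 2) * (y * exp (-c * y ^ 2)) / a ^ 2 := by
  have hxy : a ^ 2 ≤ x * y := by nlinarith
  rw [le_div_iff₀ (by positivity), show x * exp (-c * x ^ 2) * (y * exp (-c * y ^ 2))
    = x * y * exp (-c * (x ^ 2 + y ^ 2)) by rw [mul_add, exp_add]; ring, mul_comm]
  exact mul_le_mul_of_nonneg_right hxy (exp_pos _).le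

theorem setIntegral_Ici_prod_Ici_mul_exp_neg_mul_sq {c : ℝ} (hc : 0 < c) (a : ℝ) :
    ∫ p in Ici a ×ˢ Ici a, p.1 * exp (-c * p.1 ^ 2) * (p.2 * exp (-c * p.2 ^ 2))
      = (exp (-c * a ^ 2) / (2 * c)) ^ 2 := by
  rw [Measure.volume_eq_prod, setIntegral_prod_mul (fun x => x * exp (-c * x ^ 2))
    (fun x => x * exp (-c * x ^ 2)), integral_Ici_eq_integral_Ioi,
    integral_Ioi_mul_exp_neg_mul_sq hc]
  ring

theorem setIntegral_wedge_exp_neg_mul_sq_add_sq_lt {c a : ℝ} (hc : 0 < c) (ha : 0 < a) :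
    ∫ p in wedge a, exp (-c * (p.1 ^ 2 + p.2 ^ 2))
      < exp (-2 * c * a ^ 2) / (4 * c ^ 2 * a ^ 2) := by
  set g : ℝ × ℝ → ℝ := fun p => p.1 * exp (-c * p.1 ^ 2) * (p.2 * exp (-c * p.2 ^ 2)) / a ^ 2
  have hg : IntegrableOn g (Ici a ×ˢ Ici a) := by
    have h := (integrable_mul_exp_neg_mul_sq hc).integrableOn (s := Ici a)
    rw [IntegrableOn, Measure.volume_eq_prod, ← Measure.prod_restrict]
    exact (h.mul_prod h).div_const _
  have hg_pos : ∀ p ∈ Ici a ×ˢ Ici a, 0 < g p := fun p ⟨hx, hy⟩ => by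
    have := ha.trans_le hx
    have := ha.trans_le hy
    positivity
  calc ∫ p in wedge a, exp (-c * (p.1 ^ 2 + p.2 ^ 2))
      ≤ ∫ p in wedge a, g p :=
        integral_mono_of_nonneg (ae_of_all _ fun _ => (exp_pos _).le)
          (hg.mono_set (wedge_subset_Ici_prod_Ici a))
          (ae_restrict_of_forall_mem (measurableSet_wedge a)
            fun _ ⟨hy, hyx⟩ => exp_neg_mul_sq_add_sq_le ha hy hyx)
    _ < ∫ p in Ici a ×ˢ Ici a, g p :=
        setIntegral_lt_setIntegral_of_subset (measurableSet_wedge a)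
          (measurableSet_Ici.prod measurableSet_Ici) (wedge_subset_Ici_prod_Ici a) hg
          (fun p hp => hg_pos p hp.1) (volume_Ici_prod_Ici_diff_wedge_pos a)
    _ = exp (-2 * c * a ^ 2) / (4 * c ^ 2 * a ^ 2) := by
        rw [integral_div, setIntegral_Ici_prod_Ici_mul_exp_neg_mul_sq hc, div_pow, ← exp_nat_mul]
        push_cast
        field_simp
        ring_nf

/-- Bound for the double integral of the Gaussian over `D₁ = {(x,y) : x ≥ y ≥ M}`. -/
theorem gaussian_double_integral_bound (α t : ℝ) (hα : 0 < α) (ht : 0 < t)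
    (M : ℕ) (hM : 1 ≤ M) :
    (∫ p in {p : ℝ × ℝ | (M : ℝ) ≤ p.2 ∧ p.2 ≤ p.1},
        Real.exp (-α * (p.1 ^ 2 + p.2 ^ 2) * π ^ 2 * t)) <
      1 / (4 * M ^ 2 * π ^ 4 * α ^ 2 * t ^ 2) * Real.exp (-2 * α * M ^ 2 * π ^ 2 * t) := by
  have hc : 0 < α * π ^ 2 * t := by positivity
  have hM : (0 : ℝ) < M := by exact_mod_cast hM
  convert setIntegral_wedge_exp_neg_mul_sq_add_sq_lt hc hM using 1
  · simp only [wedge]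
    congr with p
    ring_nf
  · field_simp
end

section
/- Suppose α ≥ α₀ > 0, (Cₙ)_{n≥0} is a real sequence with Σₙ |Cₙ|² ≤ 2M₀², and λₙ = α n² π². Then for every t ≥ T₁ > 0 and every positive integer M, the tail e(M,t) = Σ_{n=M}^∞ Cₙ e^{-λₙ t} satisfies |e(M,t)| < (√2 + 1/(4 M π² α₀ T₁)) · M₀ · e^{-α₀ M² π² T₁}. -/
/-!
By Cauchy–Schwarz the tail is at most `‖C‖₂ ≤ √2 M₀` times the `ℓ²` norm of the exponentials.
With `a = α₀ π² T₁`, their squares are dominated by the Gaussian terms `exp (-2a (M + n)²)`,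
and since `(M + n)² ≥ M² + 2Mn` these sum to at most the geometric series
`exp (-2aM²) / (1 - exp (-4aM)) ≤ exp (-2aM²) (1 + 1 / (4aM))`, using `eˣ ≥ 1 + x`.
Finally `√2 √(1 + u) ≤ √2 (1 + u / 2) < √2 + u`.
-/

open Real

theorem abs_tsum_mul_le_sqrt_mul_sqrt {ι : Type*} {f g : ι → ℝ}
    (hf : Summable fun i => f i ^ 2) (hg : Summable fun i => g i ^ 2) :
    |∑' i, f i * g i| ≤ √(∑' i, f i ^ 2) * √(∑' i, g i ^ 2) := by
  obtain ⟨habs, hle⟩ := summable_and_inner_le_Lp_mul_Lq_tsum_of_nonneg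
    HolderConjugate.two_two (f := fun i => |f i|) (g := fun i => |g i|)
    (fun _ => abs_nonneg _) (fun _ => abs_nonneg _)
    (by simpa [rpow_two] using hf) (by simpa [rpow_two] using hg)
  simp only [rpow_two, sq_abs, ← sqrt_eq_rpow, ← abs_mul] at habs hle
  calc |∑' i, f i * g i| ≤ ∑' i, |f i * g i| := by
        simpa only [norm_eq_abs] using norm_tsum_le_tsum_norm (f := fun i => f i * g i) habs
    _ ≤ _ := hle

theorem inv_one_sub_exp_neg_le {x : ℝ} (hx : 0 < x) : (1 - exp (-x))⁻¹ ≤ 1 + 1 / x := by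
  have hexp : exp (-x) ≤ (1 + x)⁻¹ := by
    rw [exp_neg]; exact inv_anti₀ (by positivity) (by linarith [add_one_le_exp x])
  have hsub : x / (1 + x) ≤ 1 - exp (-x) := by
    have : x / (1 + x) = 1 - (1 + x)⁻¹ := by field_simp; ring
    linarith
  calc (1 - exp (-x))⁻¹ ≤ (x / (1 + x))⁻¹ := inv_anti₀ (by positivity) hsub
    _ = 1 + 1 / x := by field_simp; ring

theorem exp_neg_mul_add_sq_le_geometric {b : ℝ} (hb : 0 ≤ b) (y : ℝ) (n : ℕ) :
    exp (-b * (y + n) ^ 2) ≤ exp (-b * y ^ 2) * exp (-(2 * b * y)) ^ n := by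
  rw [← exp_nat_mul, ← exp_add]
  exact exp_le_exp.mpr (by nlinarith [mul_nonneg hb (sq_nonneg (n : ℝ))])

theorem summable_exp_neg_mul_add_sq {b y : ℝ} (hb : 0 < b) (hy : 0 < y) :
    Summable fun n : ℕ => exp (-b * (y + n) ^ 2) :=
  .of_nonneg_of_le (fun _ => (exp_pos _).le) (exp_neg_mul_add_sq_le_geometric hb.le y)
    ((summable_geometric_of_lt_one (exp_pos _).le
      (exp_lt_one_iff.mpr (by simp; positivity))).mul_left _)

theorem tsum_exp_neg_mul_add_sq_le {b y : ℝ} (hb : 0 < b) (hy : 0 < y) :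
    ∑' n : ℕ, exp (-b * (y + n) ^ 2) ≤ exp (-b * y ^ 2) * (1 + 1 / (2 * b * y)) := by
  have hr : exp (-(2 * b * y)) < 1 := exp_lt_one_iff.mpr (by simp; positivity)
  calc ∑' n : ℕ, exp (-b * (y + n) ^ 2)
      ≤ ∑' n : ℕ, exp (-b * y ^ 2) * exp (-(2 * b * y)) ^ n :=
        (summable_exp_neg_mul_add_sq hb hy).tsum_le_tsum (exp_neg_mul_add_sq_le_geometric hb.le y)
          ((summable_geometric_of_lt_one (exp_pos _).le hr).mul_left _)
    _ = exp (-b * y ^ 2) * (1 - exp (-(2 * b * y)))⁻¹ := by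
        rw [tsum_mul_left, tsum_geometric_of_lt_one (exp_pos _).le hr]
    _ ≤ exp (-b * y ^ 2) * (1 + 1 / (2 * b * y)) :=
        mul_le_mul_of_nonneg_left (inv_one_sub_exp_neg_le (by positivity)) (exp_pos _).le

theorem sqrt_two_mul_sqrt_one_add_lt {u : ℝ} (hu : 0 < u) : √2 * √(1 + u) < √2 + u := by
  rw [← sqrt_mul zero_le_two, sqrt_lt' (by positivity)]
  have hsqrt2 : (1 : ℝ) < √2 := by rw [lt_sqrt zero_le_one]; norm_num
  nlinarith [sq_sqrt (zero_le_two : (0:ℝ) ≤ 2)]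

/-- Tail bound for the Dirichlet series: if `α ≥ α₀ > 0`, `Σ Cₙ² ≤ 2M₀²`, `λₙ = α n² π²`,
then for `t ≥ T₁ > 0` and `M ≥ 1`,
`|Σ_{n=M}^∞ Cₙ e^(-λₙ t)| < (√2 + 1/(4Mπ²α₀T₁)) M₀ e^(-α₀ M² π² T₁)`. -/
theorem dirichlet_tail_bound (α α₀ M₀ T₁ t : ℝ) (C : ℕ → ℝ)
    (hα₀ : 0 < α₀) (hα : α₀ ≤ α) (hM₀ : 0 < M₀) (hT₁ : 0 < T₁) (ht : T₁ ≤ t)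
    (hC : ∑' n : ℕ, (C n) ^ 2 ≤ 2 * M₀ ^ 2) (hCsum : Summable fun n : ℕ => (C n) ^ 2)
    (M : ℕ) (hM : 1 ≤ M) :
    |∑' n : ℕ, C (M + n) * Real.exp (-(α * (M + n : ℕ) ^ 2 * π ^ 2) * t)| <
      (Real.sqrt 2 + 1 / (4 * M * π ^ 2 * α₀ * T₁)) * M₀ *
        Real.exp (-α₀ * M ^ 2 * π ^ 2 * T₁) := by
  set a := α₀ * π ^ 2 * T₁ with ha
  have hM' : (0 : ℝ) < M := by exact_mod_cast hM
  have htail_summable : Summable fun n => C (M + n) ^ 2 :=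
    hCsum.comp_injective (add_right_injective M)
  have htail : ∑' n, C (M + n) ^ 2 ≤ 2 * M₀ ^ 2 :=
    (htail_summable.tsum_le_tsum_of_inj (M + ·) (add_right_injective M)
      (fun _ _ => sq_nonneg _) (fun _ => le_rfl) hCsum).trans hC
  have hdecay : ∀ n : ℕ, exp (-(α * (M + n : ℕ) ^ 2 * π ^ 2) * t) ^ 2 ≤
      exp (-(2 * a) * (M + n) ^ 2) := by
    intro n
    rw [← exp_nat_mul, exp_le_exp, ha]
    push_cast
    have hαt : α₀ * T₁ ≤ α * t := mul_le_mul hα ht hT₁.le (hα₀.le.trans hα)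
    nlinarith [mul_le_mul_of_nonneg_left hαt (by positivity : (0:ℝ) ≤ π ^ 2 * (M + n) ^ 2)]
  have hgauss := tsum_exp_neg_mul_add_sq_le (b := 2 * a) (by positivity) hM'
  have hexp_sq : exp (-(2 * a) * M ^ 2) = exp (-a * M ^ 2) ^ 2 := by
    rw [← exp_nat_mul]; ring_nf
  have hgauss_summable := summable_exp_neg_mul_add_sq (b := 2 * a) (by positivity) hM'
  have hdecay_summable := hgauss_summable.of_nonneg_of_le (fun _ => sq_nonneg _) hdecay
  calc _ ≤ √(∑' n, C (M + n) ^ 2) * √(∑' n : ℕ, exp (-(α * (M + n : ℕ) ^ 2 * π ^ 2) * t) ^ 2) :=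
        abs_tsum_mul_le_sqrt_mul_sqrt htail_summable hdecay_summable
    _ ≤ √(2 * M₀ ^ 2) * √(exp (-a * M ^ 2) ^ 2 * (1 + 1 / (2 * (2 * a) * M))) := by
        gcongr
        rw [← hexp_sq]
        exact (hdecay_summable.tsum_le_tsum hdecay hgauss_summable).trans hgauss
    _ = M₀ * exp (-a * M ^ 2) * (√2 * √(1 + 1 / (4 * a * M))) := by
        rw [sqrt_mul zero_le_two, sqrt_mul (by positivity), sqrt_sq hM₀.le, sqrt_sq (exp_pos _).le]
        ring_nf
    _ < M₀ * exp (-a * M ^ 2) * (√2 + 1 / (4 * a * M)) := by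
        gcongr
        exact sqrt_two_mul_sqrt_one_add_lt (by positivity)
    _ = _ := by rw [ha]; ring_nf
end

section
/- Let (Cₙ)_{n≥0} be a square-summable real sequence and λₙ = α n² π² with α > 0. If y(t) = Σ_{n=0}^∞ Cₙ e^{-λₙ t} vanishes identically on some nontrivial interval [T₁, T₂] with 0 < T₁ < T₂, then Cₙ = 0 for all n. -/
/-!
The series extends to a holomorphic function of `s` on the half-plane `0 < re s`, so by the
identity theorem its vanishing on `[T₁, T₂]` forces it to vanish for every `t > 0`. As `t → ∞`
the first nonzero term dominates: if `C₀ = ⋯ = Cₙ₋₁ = 0`, dominated convergence gives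
`e^{λₙ t} y(t) → Cₙ`, hence `Cₙ = 0`, and strong induction on `n` concludes.
-/

open Real Filter Topology

lemma summable_norm_mul_of_summable_sq {ι : Type*} {f g : ι → ℝ}
    (hf : Summable fun i => f i ^ 2) (hg : Summable g) : Summable fun i => ‖f i‖ * g i := by
  have hsmall : ∀ᶠ i in cofinite, f i ^ 2 < 1 :=
    hf.tendsto_cofinite_zero.eventually (gt_mem_nhds one_pos)
  refine hg.abs.of_norm_bounded_eventually (hsmall.mono fun i hi => ?_)
  rw [norm_mul, norm_norm, Real.norm_eq_abs, Real.norm_eq_abs]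
  exact mul_le_of_le_one_left (abs_nonneg _) ((sq_lt_one_iff_abs_lt_one _).1 hi).le

lemma summable_exp_neg_mul_sq {c : ℝ} (hc : 0 < c) :
    Summable fun n : ℕ => rexp (-c * n ^ 2) :=
  summable_exp_nat_mul_of_ge (neg_neg_of_pos hc) fun n => by
    exact_mod_cast Nat.le_self_pow two_ne_zero n

section DirichletSeries

variable {ℓ : ℕ → ℝ}

lemma analyticOnNhd_tsum_mul_cexp_neg {a : ℕ → ℂ} (hℓ : ∀ n, 0 ≤ ℓ n)
    (ha : ∀ t > 0, Summable fun n => ‖a n‖ * rexp (-ℓ n * t)) :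
    AnalyticOnNhd ℂ (fun s : ℂ => ∑' n, a n * Complex.exp (-ℓ n * s)) {s | 0 < s.re} := by
  have hopen (δ : ℝ) : IsOpen {s : ℂ | δ < s.re} :=
    isOpen_lt continuous_const Complex.continuous_re
  refine DifferentiableOn.analyticOnNhd (fun s hs => ?_) (hopen 0)
  have hδ : 0 < s.re / 2 := half_pos hs
  have hdiff : DifferentiableOn ℂ (fun s : ℂ => ∑' n, a n * Complex.exp (-ℓ n * s))
      {w | s.re / 2 < w.re} := by
    refine Complex.differentiableOn_tsum_of_summable_norm (ha _ hδ) (fun n => by fun_prop)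
      (hopen _) fun n w hw => ?_
    rw [norm_mul, Complex.norm_exp]
    gcongr
    simpa using mul_le_mul_of_nonneg_left hw.le (hℓ n)
  have hs' : s ∈ {w : ℂ | s.re / 2 < w.re} := show s.re / 2 < s.re from half_lt_self hs
  exact (hdiff.differentiableAt ((hopen _).mem_nhds hs')).differentiableWithinAt

lemma tsum_mul_exp_neg_eq_zero_of_frequently {C : ℕ → ℝ} (hℓ : ∀ n, 0 ≤ ℓ n)
    (hC : ∀ t > 0, Summable fun n => ‖C n‖ * rexp (-ℓ n * t)) {t₀ : ℝ} (ht₀ : 0 < t₀)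
    (hzero : ∃ᶠ t in 𝓝[≠] t₀, ∑' n, C n * rexp (-ℓ n * t) = 0) {t : ℝ} (ht : 0 < t) :
    ∑' n, C n * rexp (-ℓ n * t) = 0 := by
  set F := fun s : ℂ => ∑' n, (C n : ℂ) * Complex.exp (-ℓ n * s)
  have hF (t : ℝ) : F t = ↑(∑' n, C n * rexp (-ℓ n * t)) := by
    simp [F, Complex.ofReal_tsum, Complex.ofReal_exp]
  have hFan : AnalyticOnNhd ℂ F {s | 0 < s.re} :=
    analyticOnNhd_tsum_mul_cexp_neg hℓ (by simpa using hC)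
  have hfreq : ∃ᶠ s in 𝓝[≠] (t₀ : ℂ), F s = 0 :=
    (Complex.continuous_ofReal.continuousWithinAt.tendsto_nhdsWithin
      fun _ h => Complex.ofReal_injective.ne h).frequently
      (hzero.mono fun t ht => by rw [hF, ht, Complex.ofReal_zero])
  have := hFan.eqOn_zero_of_preconnected_of_frequently_eq_zero
    (convex_halfSpace_re_gt 0).isPreconnected (by simpa using ht₀) hfreq
    (show (t : ℂ) ∈ {s : ℂ | 0 < s.re} by simpa using ht)
  simpa [hF] using this

lemma tendsto_exp_mul_tsum_mul_exp_neg {C : ℕ → ℝ} (hℓ : StrictMono ℓ)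
    (hC : Summable fun m => ‖C m‖ * rexp (-ℓ m)) {n : ℕ} (hlow : ∀ m < n, C m = 0) :
    Tendsto (fun t => rexp (ℓ n * t) * ∑' m, C m * rexp (-ℓ m * t)) atTop (𝓝 (C n)) := by
  have hrw (t : ℝ) : rexp (ℓ n * t) * ∑' m, C m * rexp (-ℓ m * t)
      = ∑' m, C m * rexp ((ℓ n - ℓ m) * t) := by
    rw [← tsum_mul_left]
    congr 1 with m
    rw [mul_left_comm, ← Real.exp_add]
    ring_nf
  simp_rw [hrw]
  rw [← tsum_ite_eq n fun _ => C n]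
  refine tendsto_tsum_of_dominated_convergence (hC.mul_left (rexp (ℓ n))) (fun m => ?_) ?_
  · rcases lt_trichotomy m n with h | rfl | h
    · simp [hlow m h, h.ne]
    · simp
    · rw [if_neg h.ne']
      have : Tendsto (fun t => rexp ((ℓ n - ℓ m) * t)) atTop (𝓝 0) :=
        tendsto_exp_comp_nhds_zero.2 (tendsto_id.const_mul_atTop_of_neg (sub_neg.2 (hℓ h)))
      simpa using this.const_mul (C m)
  · filter_upwards [eventually_ge_atTop 1] with t ht m
    rcases lt_or_ge m n with h | h
    · simp [hlow m h]
    · calc ‖C m * rexp ((ℓ n - ℓ m) * t)‖ = ‖C m‖ * rexp ((ℓ n - ℓ m) * t) := by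
            rw [norm_mul, norm_of_nonneg (exp_pos _).le]
        _ ≤ ‖C m‖ * rexp (ℓ n - ℓ m) := by
            gcongr
            nlinarith [hℓ.monotone h]
        _ = rexp (ℓ n) * (‖C m‖ * rexp (-ℓ m)) := by
            rw [mul_left_comm, ← Real.exp_add, sub_eq_add_neg]

lemma eq_zero_of_tsum_mul_exp_neg_eventually_eq_zero {C : ℕ → ℝ} (hℓ : StrictMono ℓ)
    (hC : Summable fun m => ‖C m‖ * rexp (-ℓ m))
    (hzero : ∀ᶠ t in atTop, ∑' m, C m * rexp (-ℓ m * t) = 0) (n : ℕ) : C n = 0 := by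
  induction n using Nat.strong_induction_on with
  | _ n ih =>
    refine tendsto_nhds_unique (tendsto_exp_mul_tsum_mul_exp_neg hℓ hC ih) ?_
    exact tendsto_const_nhds.congr' (hzero.mono fun t ht => by simp only [ht, mul_zero])

end DirichletSeries

/-- Uniqueness: if a Dirichlet series with square-summable coefficients and exponents
`λₙ = α n² π²` vanishes on a nontrivial interval `[T₁,T₂]`, all coefficients vanish. -/
theorem dirichlet_series_vanishing (α T₁ T₂ : ℝ) (hα : 0 < α) (hT₁ : 0 < T₁) (hT : T₁ < T₂)
    (C : ℕ → ℝ) (hCsum : Summable fun n : ℕ => (C n) ^ 2)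
    (hzero : ∀ t ∈ Set.Icc T₁ T₂,
      ∑' n : ℕ, C n * Real.exp (-(α * n ^ 2 * π ^ 2) * t) = 0) :
    ∀ n : ℕ, C n = 0 := by
  set ℓ : ℕ → ℝ := fun n => α * n ^ 2 * π ^ 2
  have hℓ : StrictMono ℓ := fun m n h => by simp only [ℓ]; gcongr
  have hC : ∀ t > 0, Summable fun n => ‖C n‖ * rexp (-ℓ n * t) := fun t ht =>
    summable_norm_mul_of_summable_sq hCsum <|
      (summable_exp_neg_mul_sq (by positivity : 0 < α * π ^ 2 * t)).congr fun n => by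
        simp only [ℓ]; ring_nf
  have hmid : ∃ᶠ t in 𝓝[≠] ((T₁ + T₂) / 2), ∑' n, C n * rexp (-ℓ n * t) = 0 := by
    refine (Eventually.filter_mono nhdsWithin_le_nhds ?_).frequently
    exact Filter.eventually_of_mem (Icc_mem_nhds (by linarith) (by linarith)) hzero
  have hpos : ∀ t > 0, ∑' n, C n * rexp (-ℓ n * t) = 0 := fun t ht =>
    tsum_mul_exp_neg_eq_zero_of_frequently (fun n => by positivity) hC (by linarith) hmid ht
  exact eq_zero_of_tsum_mul_exp_neg_eventually_eq_zero hℓ (by simpa using hC 1 one_pos)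
    ((eventually_gt_atTop 0).mono hpos)
end

section
/- Let α, β > 0 and u₀, v₀ square-summable coefficient sequences (Cₙ), (Dₙ). If Σ_{n=0}^∞ Cₙ e^{-α n² π² t} = Σ_{n=0}^∞ Dₙ e^{-β n² π² t} for all t in an interval [T₁,T₂] with 0 < T₁ < T₂, then for every n with Cₙ ≠ 0 there exists m with Dₘ = Cₙ and β m² = α n², and vice versa (the nonzero coefficient–exponent pairs coincide). -/
/-!
Both series are restrictions to the real axis of functions holomorphic on a right half-plane, so
their equality on `[T₁, T₂]` propagates to every `t ≥ T₁`. Merge them into one series with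
frequencies `α n² π²` and `β m² π²` and collect the coefficients of equal frequencies. All collected
coefficients vanish: at the smallest frequency `y₀` with a nonzero coefficient, `e^{y₀ t}` times the
series tends to that coefficient as `t → ∞`, by dominated convergence. As `n ↦ α n² π²` is
injective, the collected coefficient at `α n² π²` is `C n` minus either `D m` (if `β m² = α n²`)
or `0`.
-/

open Real Filter Topology Set

section FreqCoeff

variable {ι κ : Type*}

/-- The coefficient of `exp (-y t)` in `∑' i, c i * exp (-ℓ i * t)` once equal frequencies
are collected. -/
noncomputable def freqCoeff (ℓ c : ι → ℝ) (y : ℝ) : ℝ :=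
  ∑' i, if ℓ i = y then c i else 0

variable {ℓ c : ι → ℝ}

lemma freqCoeff_apply_of_injective (hℓ : Function.Injective ℓ) (i : ι) :
    freqCoeff ℓ c (ℓ i) = c i := by
  rw [freqCoeff, tsum_eq_single i fun j hj => if_neg (hℓ.ne hj), if_pos rfl]

lemma exists_eq_of_freqCoeff_ne_zero {y : ℝ} (h : freqCoeff ℓ c y ≠ 0) : ∃ i, ℓ i = y := by
  contrapose! h
  simp [freqCoeff, h]

lemma exists_eq_of_freqCoeff_eq {ℓ₁ c₁ : ι → ℝ} {ℓ₂ c₂ : κ → ℝ} (hℓ₁ : Function.Injective ℓ₁)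
    (hℓ₂ : Function.Injective ℓ₂) (h : ∀ y, freqCoeff ℓ₁ c₁ y = freqCoeff ℓ₂ c₂ y) (i : ι)
    (hi : c₁ i ≠ 0) : ∃ j, c₂ j = c₁ i ∧ ℓ₂ j = ℓ₁ i := by
  have hi' : freqCoeff ℓ₂ c₂ (ℓ₁ i) = c₁ i := by rw [← h, freqCoeff_apply_of_injective hℓ₁]
  obtain ⟨j, hj⟩ := exists_eq_of_freqCoeff_ne_zero (hi' ▸ hi)
  exact ⟨j, by rw [← hi', ← hj, freqCoeff_apply_of_injective hℓ₂], hj⟩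

lemma hasSum_ite_eq_freqCoeff {y : ℝ} (hfin : {i | ℓ i = y}.Finite) :
    HasSum (fun i => if ℓ i = y then c i else 0) (freqCoeff ℓ c y) :=
  (summable_of_hasFiniteSupport (hfin.subset fun i hi => by
    by_contra h; exact hi (if_neg h))).hasSum

lemma freqCoeff_sumElim_neg {ℓ₁ c₁ : ι → ℝ} {ℓ₂ c₂ : κ → ℝ} {y : ℝ}
    (h₁ : {i | ℓ₁ i = y}.Finite) (h₂ : {j | ℓ₂ j = y}.Finite) :
    freqCoeff (Sum.elim ℓ₁ ℓ₂) (Sum.elim c₁ (-c₂)) y = freqCoeff ℓ₁ c₁ y - freqCoeff ℓ₂ c₂ y := by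
  refine ((hasSum_ite_eq_freqCoeff h₁).sum
    ((hasSum_ite_eq_freqCoeff h₂).neg.congr_fun fun j => ?_)).tsum_eq
  by_cases h : ℓ₂ j = y <;> simp [h]

end FreqCoeff

section AnalyticContinuation

variable {ι : Type*} {ℓ c : ι → ℝ} {s : ℝ}

lemma differentiableOn_tsum_mul_cexp (hℓ : ∀ i, 0 ≤ ℓ i)
    (hs : Summable fun i => c i * exp (-ℓ i * s)) :
    DifferentiableOn ℂ (fun z : ℂ => ∑' i, (c i : ℂ) * Complex.exp (-ℓ i * z))
      {z | s < z.re} := by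
  refine Complex.differentiableOn_tsum_of_summable_norm hs.abs
    (fun i => (Differentiable.differentiableOn (by fun_prop)))
    (isOpen_lt continuous_const Complex.continuous_re) fun i z hz => ?_
  rw [norm_mul, Complex.norm_real, Complex.norm_exp, abs_mul, abs_exp]
  have : (-(ℓ i : ℂ) * z).re = -ℓ i * z.re := by simp
  rw [this, Real.norm_eq_abs]
  exact mul_le_mul_of_nonneg_left
    (exp_le_exp.2 (mul_le_mul_of_nonpos_left hz.le (neg_nonpos.2 (hℓ i)))) (abs_nonneg _)

lemma ofReal_tsum_mul_exp (t : ℝ) :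
    ((∑' i, c i * exp (-ℓ i * t) : ℝ) : ℂ) = ∑' i, (c i : ℂ) * Complex.exp (-ℓ i * t) := by
  push_cast [Complex.ofReal_tsum]
  rfl

lemma tsum_mul_exp_eq_zero_of_eqOn_Icc {T₁ T₂ : ℝ} (hℓ : ∀ i, 0 ≤ ℓ i)
    (hs : Summable fun i => c i * exp (-ℓ i * s)) (hsT : s < T₁) (hT : T₁ < T₂)
    (hzero : ∀ t ∈ Icc T₁ T₂, ∑' i, c i * exp (-ℓ i * t) = 0) {t : ℝ} (ht : s < t) :
    ∑' i, c i * exp (-ℓ i * t) = 0 := by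
  set F : ℝ → ℂ := fun t => ∑' i, (c i : ℂ) * Complex.exp (-ℓ i * t)
  have hF : AnalyticOnNhd ℝ F (Ioi s) :=
    ((differentiableOn_tsum_mul_cexp hℓ hs).analyticOnNhd
      (isOpen_lt continuous_const Complex.continuous_re)).restrictScalars.comp
      (fun x _ => Complex.ofRealCLM.analyticAt x) fun x hx => hx
  have hF_Icc : ∀ x ∈ Icc T₁ T₂, F x = 0 := fun x hx => by
    simp only [F, ← ofReal_tsum_mul_exp, hzero x hx, Complex.ofReal_zero]
  have hleft : ∀ᶠ x in 𝓝[<] T₂, F x = 0 :=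
    Filter.mem_of_superset (Ioo_mem_nhdsLT hT) fun x hx => hF_Icc x ⟨hx.1.le, hx.2.le⟩
  have hfreq : ∃ᶠ x in 𝓝[≠] T₂, F x = 0 :=
    hleft.frequently.filter_mono (nhdsWithin_mono _ fun x hx => ne_of_lt hx)
  have hFt : F t = 0 :=
    hF.eqOn_zero_of_preconnected_of_frequently_eq_zero isPreconnected_Ioi (hsT.trans hT) hfreq ht
  exact_mod_cast (ofReal_tsum_mul_exp t).trans hFt

end AnalyticContinuation

section Uniqueness

variable {ι : Type*} {ℓ c : ι → ℝ} {T y₀ : ℝ}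

lemma tsum_ite_lt_mul_exp_eq_zero (hfin : {i | ℓ i < y₀}.Finite)
    (hlow : ∀ y < y₀, freqCoeff ℓ c y = 0) (t : ℝ) :
    ∑' i, (if ℓ i < y₀ then c i * exp (-ℓ i * t) else 0) = 0 := by
  classical
  set S := hfin.toFinset
  have hS : ∀ i, i ∈ S ↔ ℓ i < y₀ := fun i => hfin.mem_toFinset
  have hfiber : ∀ y ∈ S.image ℓ, ∑ i ∈ S with ℓ i = y, c i = 0 := by
    intro y hy
    obtain ⟨i, hi, rfl⟩ := Finset.mem_image.1 hy
    rw [← hlow (ℓ i) ((hS i).1 hi), freqCoeff, Finset.sum_filter,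
      tsum_eq_sum fun j hj => if_neg fun (h : ℓ j = ℓ i) => hj ((hS j).2 (h ▸ (hS i).1 hi))]
  rw [tsum_eq_sum fun i hi => if_neg (mt (hS i).2 hi),
    Finset.sum_congr rfl fun i hi => if_pos ((hS i).1 hi),
    ← Finset.sum_fiberwise_of_maps_to fun i hi => Finset.mem_image_of_mem ℓ hi]
  refine Finset.sum_eq_zero fun y hy => ?_
  calc ∑ i ∈ S with ℓ i = y, c i * exp (-ℓ i * t)
      = ∑ i ∈ S with ℓ i = y, c i * exp (-y * t) :=
        Finset.sum_congr rfl fun i hi => by rw [(Finset.mem_filter.1 hi).2]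
    _ = 0 := by rw [← Finset.sum_mul, hfiber y hy, zero_mul]

lemma freqCoeff_eq_zero_of_forall_lt (hfin : {i | ℓ i < y₀}.Finite)
    (hsum : ∀ t ≥ T, Summable fun i => c i * exp (-ℓ i * t))
    (hzero : ∀ t ≥ T, ∑' i, c i * exp (-ℓ i * t) = 0)
    (hlow : ∀ y < y₀, freqCoeff ℓ c y = 0) : freqCoeff ℓ c y₀ = 0 := by
  set f : ℝ → ι → ℝ := fun t i => if y₀ ≤ ℓ i then c i * exp ((y₀ - ℓ i) * t) else 0
  have hf_zero : ∀ t ≥ T, ∑' i, f t i = 0 := by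
    intro t ht
    have hsplit : ∀ i, f t i = exp (y₀ * t) *
        (c i * exp (-ℓ i * t) - if ℓ i < y₀ then c i * exp (-ℓ i * t) else 0) := by
      intro i
      by_cases h : y₀ ≤ ℓ i
      · rw [if_neg h.not_gt, sub_zero, mul_left_comm, ← exp_add]
        simp only [f, if_pos h]
        ring_nf
      · rw [if_pos (not_le.1 h), sub_self, mul_zero]
        exact if_neg h
    have hlow_summable : Summable fun i => if ℓ i < y₀ then c i * exp (-ℓ i * t) else 0 :=
      summable_of_hasFiniteSupport (hfin.subset fun i hi => by by_contra h; exact hi (if_neg h))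
    rw [tsum_congr hsplit, tsum_mul_left, (hsum t ht).tsum_sub hlow_summable, hzero t ht,
      tsum_ite_lt_mul_exp_eq_zero hfin hlow t, sub_zero, mul_zero]
  have hlim : Tendsto (fun t => ∑' i, f t i) atTop (𝓝 (freqCoeff ℓ c y₀)) := by
    refine tendsto_tsum_of_dominated_convergence (g := fun i => if ℓ i = y₀ then c i else 0)
      (bound := fun i => exp (y₀ * T) * |c i * exp (-ℓ i * T)|)
      ((hsum T le_rfl).abs.mul_left _) (fun i => ?_) ?_
    · rcases lt_trichotomy (ℓ i) y₀ with h | h | h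
      · simp [f, h.not_ge, h.ne]
      · simp [f, h]
      · simp only [f, if_pos h.le, if_neg h.ne']
        simpa using ((tendsto_exp_atBot.comp
          (tendsto_id.const_mul_atTop_of_neg (sub_neg.2 h))).const_mul (c i))
    · filter_upwards [eventually_ge_atTop T] with t ht i
      simp only [f]
      split_ifs with h
      · rw [norm_mul, Real.norm_eq_abs, Real.norm_eq_abs, abs_mul, abs_exp, abs_exp, mul_left_comm,
          ← exp_add]
        gcongr _ * exp ?_
        nlinarith
      · rw [norm_zero]
        positivity
  exact tendsto_nhds_unique hlim
    (tendsto_const_nhds.congr' (eventually_atTop.2 ⟨T, fun t ht => (hf_zero t ht).symm⟩))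

theorem freqCoeff_eq_zero (hfin : ∀ y, {i | ℓ i ≤ y}.Finite)
    (hsum : ∀ t ≥ T, Summable fun i => c i * exp (-ℓ i * t))
    (hzero : ∀ t ≥ T, ∑' i, c i * exp (-ℓ i * t) = 0) (y : ℝ) : freqCoeff ℓ c y = 0 := by
  by_contra hy
  have hbad : {y' | freqCoeff ℓ c y' ≠ 0 ∧ y' ≤ y}.Finite :=
    ((hfin y).image ℓ).subset fun y' ⟨hne, hle⟩ => by
      obtain ⟨i, rfl⟩ := exists_eq_of_freqCoeff_ne_zero hne
      exact ⟨i, hle, rfl⟩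
  obtain ⟨y₀, -, ⟨hy₀, hy₀y⟩, hmin⟩ := hbad.exists_le_minimal ⟨hy, le_rfl⟩
  refine hy₀ (freqCoeff_eq_zero_of_forall_lt ((hfin y₀).subset fun _ hi => le_of_lt (α := ℝ) hi)
    hsum hzero fun y' hy' => ?_)
  by_contra hne
  exact hy'.not_ge (hmin ⟨hne, hy'.le.trans hy₀y⟩ hy'.le)

end Uniqueness

section TwoSeries

variable {ι κ : Type*} {ℓ₁ c₁ : ι → ℝ} {ℓ₂ c₂ : κ → ℝ} {T₁ T₂ : ℝ}

theorem freqCoeff_eq_of_eqOn_Icc (hℓ₁ : ∀ i, 0 ≤ ℓ₁ i) (hℓ₂ : ∀ j, 0 ≤ ℓ₂ j)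
    (hfin₁ : ∀ y, {i | ℓ₁ i ≤ y}.Finite) (hfin₂ : ∀ y, {j | ℓ₂ j ≤ y}.Finite)
    (hsum₁ : ∀ t > 0, Summable fun i => c₁ i * exp (-ℓ₁ i * t))
    (hsum₂ : ∀ t > 0, Summable fun j => c₂ j * exp (-ℓ₂ j * t)) (hT₁ : 0 < T₁) (hT : T₁ < T₂)
    (heq : ∀ t ∈ Icc T₁ T₂, ∑' i, c₁ i * exp (-ℓ₁ i * t) = ∑' j, c₂ j * exp (-ℓ₂ j * t))
    (y : ℝ) : freqCoeff ℓ₁ c₁ y = freqCoeff ℓ₂ c₂ y := by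
  set ℓ := Sum.elim ℓ₁ ℓ₂
  set c := Sum.elim c₁ (-c₂)
  have hsplit : ∀ t > 0, HasSum (fun k => c k * exp (-ℓ k * t))
      (∑' i, c₁ i * exp (-ℓ₁ i * t) - ∑' j, c₂ j * exp (-ℓ₂ j * t)) := fun t ht =>
    (hsum₁ t ht).hasSum.sum ((hsum₂ t ht).hasSum.neg.congr_fun fun j => by simp [c, ℓ])
  have hfin : ∀ y, {k | ℓ k ≤ y}.Finite := fun y =>
    finite_preimage_inl_and_inr.1 ⟨hfin₁ y, hfin₂ y⟩
  have hzero : ∀ t ≥ T₁, ∑' k, c k * exp (-ℓ k * t) = 0 := fun t ht =>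
    tsum_mul_exp_eq_zero_of_eqOn_Icc (Sum.rec hℓ₁ hℓ₂) (hsplit _ (half_pos hT₁)).summable
      (half_lt_self hT₁) hT
      (fun t ht => (hsplit t (hT₁.trans_le ht.1)).tsum_eq.trans (sub_eq_zero.2 (heq t ht)))
      ((half_lt_self hT₁).trans_le ht)
  rw [← sub_eq_zero, ← freqCoeff_sumElim_neg ((hfin₁ y).subset fun _ hi => le_of_eq hi)
    ((hfin₂ y).subset fun _ hi => le_of_eq hi)]
  exact freqCoeff_eq_zero hfin (fun t ht => (hsplit t (hT₁.trans_le ht)).summable) hzero y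

end TwoSeries

lemma summable_mul_of_summable_sq {ι : Type*} {f g : ι → ℝ} (hf : Summable fun i => f i ^ 2)
    (hg : Summable fun i => g i ^ 2) : Summable fun i => f i * g i :=
  (hf.add hg).of_norm_bounded fun i => by
    rw [Real.norm_eq_abs, abs_mul]
    nlinarith [sq_nonneg (|f i| - |g i|), sq_abs (f i), sq_abs (g i), abs_nonneg (f i),
      abs_nonneg (g i)]

section LinearGrowth

variable {ℓ : ℕ → ℝ} {a : ℝ}

lemma summable_exp_neg_mul_of_linear_le (ha : 0 < a) (hℓ : ∀ n : ℕ, a * n ≤ ℓ n) {t : ℝ}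
    (ht : 0 < t) : Summable fun n => exp (-ℓ n * t) :=
  (summable_exp_nat_mul_iff.2 (neg_neg_of_pos (mul_pos ha ht))).of_nonneg_of_le
    (fun _ => (exp_pos _).le) fun n =>
      exp_le_exp.2 (by nlinarith [mul_le_mul_of_nonneg_right (hℓ n) ht.le])

lemma summable_mul_exp_neg_mul_of_linear_le (ha : 0 < a) (hℓ : ∀ n : ℕ, a * n ≤ ℓ n)
    {C : ℕ → ℝ} (hC : Summable fun n => C n ^ 2) {t : ℝ} (ht : 0 < t) :
    Summable fun n => C n * exp (-ℓ n * t) :=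
  summable_mul_of_summable_sq hC <|
    (summable_exp_neg_mul_of_linear_le ha hℓ (mul_pos two_pos ht)).congr fun n => by
      rw [sq, ← exp_add]
      ring_nf

lemma finite_setOf_le_of_linear_le (ha : 0 < a) (hℓ : ∀ n : ℕ, a * n ≤ ℓ n) (y : ℝ) :
    {n | ℓ n ≤ y}.Finite :=
  (finite_Iic ⌊y / a⌋₊).subset fun n hn =>
    Nat.le_floor ((le_div_iff₀' ha).2 ((hℓ n).trans hn))

theorem freqCoeff_eq_of_eqOn_Icc_of_linear_le {ℓ₁ ℓ₂ : ℕ → ℝ} {a₁ a₂ T₁ T₂ : ℝ} (ha₁ : 0 < a₁)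
    (ha₂ : 0 < a₂) (hℓ₁ : ∀ n : ℕ, a₁ * n ≤ ℓ₁ n) (hℓ₂ : ∀ n : ℕ, a₂ * n ≤ ℓ₂ n)
    {C D : ℕ → ℝ} (hC : Summable fun n => C n ^ 2) (hD : Summable fun n => D n ^ 2)
    (hT₁ : 0 < T₁) (hT : T₁ < T₂)
    (heq : ∀ t ∈ Icc T₁ T₂, ∑' n, C n * exp (-ℓ₁ n * t) = ∑' n, D n * exp (-ℓ₂ n * t))
    (y : ℝ) : freqCoeff ℓ₁ C y = freqCoeff ℓ₂ D y :=
  freqCoeff_eq_of_eqOn_Icc (fun n : ℕ => (by positivity : 0 ≤ a₁ * n).trans (hℓ₁ n))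
    (fun n : ℕ => (by positivity : 0 ≤ a₂ * n).trans (hℓ₂ n))
    (finite_setOf_le_of_linear_le ha₁ hℓ₁) (finite_setOf_le_of_linear_le ha₂ hℓ₂)
    (fun _ => summable_mul_exp_neg_mul_of_linear_le ha₁ hℓ₁ hC)
    (fun _ => summable_mul_exp_neg_mul_of_linear_le ha₂ hℓ₂ hD) hT₁ hT heq y

end LinearGrowth

section QuadraticExponents

variable {γ : ℝ}

lemma linear_le_mul_sq_mul_pi_sq (hγ : 0 < γ) (n : ℕ) : γ * π ^ 2 * n ≤ γ * n ^ 2 * π ^ 2 := by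
  have hn : (n : ℝ) ≤ n ^ 2 := by exact_mod_cast Nat.le_self_pow two_ne_zero n
  nlinarith [mul_le_mul_of_nonneg_left hn (by positivity : 0 ≤ γ * π ^ 2)]

lemma injective_mul_sq_mul_pi_sq (hγ : 0 < γ) :
    Function.Injective fun n : ℕ => γ * n ^ 2 * π ^ 2 :=
  StrictMono.injective fun m n h => by gcongr

end QuadraticExponents

/-- If two Dirichlet series with exponents `α n² π²` and `β n² π²` agree on an
interval, then the nonzero coefficient–exponent pairs coincide. -/
theorem dirichlet_series_pairs_coincide (α β T₁ T₂ : ℝ) (hα : 0 < α) (hβ : 0 < β)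
    (hT₁ : 0 < T₁) (hT : T₁ < T₂) (C D : ℕ → ℝ)
    (hCsum : Summable fun n : ℕ => (C n) ^ 2) (hDsum : Summable fun n : ℕ => (D n) ^ 2)
    (heq : ∀ t ∈ Set.Icc T₁ T₂,
      ∑' n : ℕ, C n * Real.exp (-(α * n ^ 2 * π ^ 2) * t) =
        ∑' n : ℕ, D n * Real.exp (-(β * n ^ 2 * π ^ 2) * t)) :
    (∀ n : ℕ, C n ≠ 0 → ∃ m : ℕ, D m = C n ∧ β * m ^ 2 = α * n ^ 2) ∧
    (∀ m : ℕ, D m ≠ 0 → ∃ n : ℕ, C n = D m ∧ α * n ^ 2 = β * m ^ 2) := by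
  have hπ : (0 : ℝ) < π ^ 2 := by positivity
  have hcoeff := freqCoeff_eq_of_eqOn_Icc_of_linear_le (mul_pos hα hπ) (mul_pos hβ hπ)
    (linear_le_mul_sq_mul_pi_sq hα) (linear_le_mul_sq_mul_pi_sq hβ) hCsum hDsum hT₁ hT heq
  refine ⟨fun n hn => ?_, fun m hm => ?_⟩
  · obtain ⟨m, hDm, hm⟩ := exists_eq_of_freqCoeff_eq (injective_mul_sq_mul_pi_sq hα)
      (injective_mul_sq_mul_pi_sq hβ) hcoeff n hn
    exact ⟨m, hDm, mul_right_cancel₀ hπ.ne' hm⟩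
  · obtain ⟨n, hCn, hn⟩ := exists_eq_of_freqCoeff_eq (injective_mul_sq_mul_pi_sq hβ)
      (injective_mul_sq_mul_pi_sq hα) (fun y => (hcoeff y).symm) m hm
    exact ⟨n, hCn, mul_right_cancel₀ hπ.ne' hn⟩
end

section
/- Let θ > 0 and L ≥ 2 a natural number. Then S₁ = Σ_{i=1}^{L-1} i e^{-θ i} ≤ M_{θ,L} + ∫₁^{L-1} x e^{-θx} dx, where M_{θ,L} equals e^{-θ} if θ ≥ 1, equals (2/θ)e^{-1} if 1/(L-1) < θ < 1, and equals (L-1)e^{-(L-1)θ} if 0 < θ ≤ 1/(L-1). -/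
/-!
The function `x ↦ x e^{-θx}` increases up to its peak at `θ⁻¹`, where it equals `e^{-1}/θ`, and
decreases afterwards. On each monotone stretch the sum over the integers is dominated by the
integral, as long as the value at the peak end is paid for separately: left Riemann sums where
the function increases, right ones where it decreases. What is left over is the value at the
integer peak or, when `θ⁻¹` falls strictly between two integers, the values at the two integers
around it, each at most `e^{-1}/θ`. The three cases of `M_{θ,L}` are `θ⁻¹ ≤ 1`,
`1 < θ⁻¹ < L - 1` and `L - 1 ≤ θ⁻¹`.
-/

open Real Set MeasureTheory

section SumIntegral

variable {f : ℝ → ℝ} {a m b : ℕ}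

theorem AntitoneOn.sum_Icc_le_add_integral (hab : a ≤ b) (hf : AntitoneOn f (Icc (a : ℝ) b)) :
    ∑ i ∈ Finset.Icc a b, f i ≤ f a + ∫ x in a..b, f x := by
  rw [← Finset.sum_Ioc_add_eq_sum_Icc hab, add_comm, ← Finset.Ico_add_one_add_one_eq_Ioc,
    ← Finset.sum_Ico_add']
  gcongr
  exact_mod_cast hf.sum_le_integral_Ico hab

theorem sum_Icc_le_add_integral_of_monotoneOn_of_antitoneOn (ham : a ≤ m) (hmb : m ≤ b)
    (hmono : MonotoneOn f (Icc (a : ℝ) m)) (hanti : AntitoneOn f (Icc (m : ℝ) b)) :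
    ∑ i ∈ Finset.Icc a b, f i ≤ f m + ∫ x in a..b, f x := by
  have hint_left : IntervalIntegrable f volume a m :=
    MonotoneOn.intervalIntegrable (by rwa [uIcc_of_le (Nat.cast_le.2 ham)])
  have hint_right : IntervalIntegrable f volume m b :=
    AntitoneOn.intervalIntegrable (by rwa [uIcc_of_le (Nat.cast_le.2 hmb)])
  rw [← Finset.Ico_add_one_right_eq_Icc, ← Finset.sum_Ico_consecutive _ ham (by omega),
    Finset.Ico_add_one_right_eq_Icc, ← intervalIntegral.integral_add_adjacent_intervals
      hint_left hint_right]
  have := hmono.sum_le_integral_Ico ham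
  have := hanti.sum_Icc_le_add_integral hmb
  linarith

theorem sum_Icc_le_add_add_integral_of_monotoneOn_of_antitoneOn (ham : a ≤ m) (hmb : m + 1 ≤ b)
    (hmono : MonotoneOn f (Icc (a : ℝ) m)) (hanti : AntitoneOn f (Icc ((m : ℝ) + 1) b))
    (hint : IntervalIntegrable f volume m (m + 1))
    (hnonneg : ∀ x ∈ Icc (m : ℝ) (m + 1), 0 ≤ f x) :
    ∑ i ∈ Finset.Icc a b, f i ≤ f m + f (m + 1) + ∫ x in a..b, f x := by
  have hint_left : IntervalIntegrable f volume a m :=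
    MonotoneOn.intervalIntegrable (by rwa [uIcc_of_le (Nat.cast_le.2 ham)])
  have hint_right : IntervalIntegrable f volume (m + 1) b :=
    AntitoneOn.intervalIntegrable (by rwa [uIcc_of_le (by exact_mod_cast hmb)])
  have hmid : 0 ≤ ∫ x in (m : ℝ)..m + 1, f x :=
    intervalIntegral.integral_nonneg (by linarith) hnonneg
  rw [← Finset.Ico_add_one_right_eq_Icc, ← Finset.sum_Ico_consecutive _ (by omega : a ≤ m + 1)
    (by omega), Finset.Ico_add_one_right_eq_Icc, Finset.Ico_add_one_right_eq_Icc,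
    ← intervalIntegral.integral_add_adjacent_intervals hint_left (hint.trans hint_right),
    ← intervalIntegral.integral_add_adjacent_intervals hint hint_right]
  have := sum_Icc_le_add_integral_of_monotoneOn_of_antitoneOn ham le_rfl hmono
    ((subsingleton_Icc_of_ge le_rfl).antitoneOn f)
  have := sum_Icc_le_add_integral_of_monotoneOn_of_antitoneOn le_rfl hmb
    ((subsingleton_Icc_of_ge le_rfl).monotoneOn f) (by exact_mod_cast hanti)
  push_cast at this
  linarith

end SumIntegral

section MulExpNegMul

theorem hasDerivAt_mul_exp_neg_mul (θ x : ℝ) :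
    HasDerivAt (fun x => x * exp (-θ * x)) ((1 - θ * x) * exp (-θ * x)) x := by
  have := (hasDerivAt_id' x).mul ((hasDerivAt_id' x).const_mul (-θ)).exp
  exact this.congr_deriv (by ring)

variable {θ : ℝ}

theorem monotoneOn_mul_exp_neg_mul (hθ : 0 < θ) :
    MonotoneOn (fun x => x * exp (-θ * x)) (Iic θ⁻¹) := by
  refine monotoneOn_of_hasDerivWithinAt_nonneg (convex_Iic _) (by fun_prop)
    (fun x _ => (hasDerivAt_mul_exp_neg_mul θ x).hasDerivWithinAt) fun x hx => ?_
  rw [interior_Iic, mem_Iio, ← mul_one θ⁻¹, lt_inv_mul_iff₀ hθ] at hx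
  exact mul_nonneg (by linarith) (exp_pos _).le

theorem antitoneOn_mul_exp_neg_mul (hθ : 0 < θ) :
    AntitoneOn (fun x => x * exp (-θ * x)) (Ici θ⁻¹) := by
  refine antitoneOn_of_hasDerivWithinAt_nonpos (convex_Ici _) (by fun_prop)
    (fun x _ => (hasDerivAt_mul_exp_neg_mul θ x).hasDerivWithinAt) fun x hx => ?_
  rw [interior_Ici, mem_Ioi, inv_lt_iff_one_lt_mul₀' hθ] at hx
  exact mul_nonpos_of_nonpos_of_nonneg (by linarith) (exp_pos _).le

theorem mul_exp_neg_mul_le (hθ : 0 < θ) (x : ℝ) : x * exp (-θ * x) ≤ exp (-1) / θ := by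
  rw [le_div_iff₀ hθ]
  calc x * exp (-θ * x) * θ = θ * x * exp (-(θ * x)) := by ring_nf
    _ ≤ exp (-1) := mul_exp_neg_le_exp_neg_one _

end MulExpNegMul

section Regimes

variable {θ : ℝ} {a b : ℕ}

theorem sum_Icc_mul_exp_neg_mul_le_of_inv_le (hθ : 0 < θ) (hab : a ≤ b) (ha : θ⁻¹ ≤ a) :
    ∑ i ∈ Finset.Icc a b, (i : ℝ) * exp (-θ * i) ≤
      a * exp (-θ * a) + ∫ x in (a : ℝ)..b, x * exp (-θ * x) :=
  sum_Icc_le_add_integral_of_monotoneOn_of_antitoneOn le_rfl hab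
    ((subsingleton_Icc_of_ge le_rfl).monotoneOn _)
    ((antitoneOn_mul_exp_neg_mul hθ).mono fun _ hx => ha.trans hx.1)

theorem sum_Icc_mul_exp_neg_mul_le_of_le_inv (hθ : 0 < θ) (hab : a ≤ b) (hb : b ≤ θ⁻¹) :
    ∑ i ∈ Finset.Icc a b, (i : ℝ) * exp (-θ * i) ≤
      b * exp (-θ * b) + ∫ x in (a : ℝ)..b, x * exp (-θ * x) :=
  sum_Icc_le_add_integral_of_monotoneOn_of_antitoneOn hab le_rfl
    ((monotoneOn_mul_exp_neg_mul hθ).mono fun _ hx => hx.2.trans hb)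
    ((subsingleton_Icc_of_ge le_rfl).antitoneOn _)

theorem sum_Icc_mul_exp_neg_mul_le_of_inv_mem (hθ : 0 < θ) (ha : a ≤ θ⁻¹) (hb : θ⁻¹ < b) :
    ∑ i ∈ Finset.Icc a b, (i : ℝ) * exp (-θ * i) ≤
      2 * (exp (-1) / θ) + ∫ x in (a : ℝ)..b, x * exp (-θ * x) := by
  set m := ⌊θ⁻¹⌋₊
  have hm_le : (m : ℝ) ≤ θ⁻¹ := Nat.floor_le (inv_nonneg.2 hθ.le)
  have hm_lt : θ⁻¹ < m + 1 := Nat.lt_floor_add_one _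
  have hsum := sum_Icc_le_add_add_integral_of_monotoneOn_of_antitoneOn
    (Nat.le_floor ha) ((Nat.floor_lt (inv_nonneg.2 hθ.le)).2 hb)
    ((monotoneOn_mul_exp_neg_mul hθ).mono fun _ hx => hx.2.trans hm_le)
    ((antitoneOn_mul_exp_neg_mul hθ).mono fun _ hx => hm_lt.le.trans hx.1)
    (Continuous.intervalIntegrable (by fun_prop) _ _)
    fun x hx => mul_nonneg ((Nat.cast_nonneg m).trans hx.1) (exp_pos _).le
  linarith [mul_exp_neg_mul_le hθ m, mul_exp_neg_mul_le hθ (m + 1)]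

end Regimes

/-- Bound for `S₁ = Σ_{i=1}^{L-1} i e^(-θi)` by `M_{θ,L} + ∫₁^{L-1} x e^(-θx) dx`. -/
theorem sum_ie_bound (θ : ℝ) (hθ : 0 < θ) (L : ℕ) (hL : 2 ≤ L) :
    ∑ i ∈ Finset.Icc 1 (L - 1), (i : ℝ) * Real.exp (-θ * i) ≤
      (if 1 ≤ θ then Real.exp (-θ)
        else if 1 / ((L : ℝ) - 1) < θ then 2 / θ * Real.exp (-1)
        else ((L : ℝ) - 1) * Real.exp (-((L : ℝ) - 1) * θ)) +
      ∫ x in (1:ℝ)..((L : ℝ) - 1), x * Real.exp (-θ * x) := by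
  obtain ⟨N, rfl⟩ : ∃ N, L = N + 1 := ⟨L - 1, by omega⟩
  have hN : 1 ≤ N := by omega
  have hNpos : (0 : ℝ) < N := by exact_mod_cast hN
  simp only [Nat.add_sub_cancel, Nat.cast_add, Nat.cast_one, add_sub_cancel_right]
  split_ifs with hθ1 hθN
  · simpa using sum_Icc_mul_exp_neg_mul_le_of_inv_le hθ hN
      (by simpa using inv_le_one_of_one_le₀ hθ1)
  · have := sum_Icc_mul_exp_neg_mul_le_of_inv_mem (a := 1) hθ
      (by simpa using (one_le_inv₀ hθ).2 (not_le.1 hθ1).le)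
      (by rwa [inv_lt_comm₀ hθ hNpos, ← one_div])
    linarith [show 2 / θ * exp (-1) = 2 * (exp (-1) / θ) by ring]
  · refine (sum_Icc_mul_exp_neg_mul_le_of_le_inv hθ hN ?_).trans_eq (by ring_nf)
    rwa [not_lt, one_div, le_inv_comm₀ hθ hNpos] at hθN
end

section
/- Let N > 9 be an integer, L = ⌈N/3⌉ (so L ≥ 4), and θ > 0. Then M_{θ,N} := (1/θ) e^{-θ(N-2)} [ (L+1−1/θ) e^{θL} + 1/θ − 1 ] < (1/θ²) e^{-θ(L-1)} + (L/θ) e^{-θ(N-L-2)}. -/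
/-!
Write `A = e^{-θ(N-2)}`, `C = A e^{θL} = e^{-θ(N-L-2)}` and
`B = e^{-θ(L-1)} = C e^{θ(N-2L-1)}`. Expanding the bracket,
`M_{θ,N} = (L/θ) C + (θ - 1)(C - A)/θ²`, so the claim reduces to `(θ - 1)(C - A) < B`.
Since `0 < A ≤ C`, and `N - 2L - 1 ≥ 1` once `L = ⌈N/3⌉` and `N ≥ 8`, this follows from
`(θ - 1)(C - A) ≤ θ(C - A) < θ C < e^θ C ≤ B`.
-/

open Real

lemma one_div_mul_mul_bracket_eq {K : Type*} [Field K] {θ A E L : K} (hθ : θ ≠ 0) :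
    1 / θ * A * ((L + 1 - 1 / θ) * E + 1 / θ - 1) =
      L / θ * (A * E) + (θ - 1) * (A * E - A) / θ ^ 2 := by
  field_simp
  ring

lemma sub_one_mul_sub_lt_mul_exp {θ A C m : ℝ} (hθ : 0 < θ) (hA : 0 < A) (hAC : A ≤ C)
    (hm : 1 ≤ m) : (θ - 1) * (C - A) < C * exp (θ * m) :=
  calc (θ - 1) * (C - A) ≤ θ * (C - A) := by nlinarith
    _ < θ * C := by nlinarith
    _ < exp θ * C := by
        have := add_one_le_exp θ
        nlinarith
    _ ≤ exp (θ * m) * C := by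
        gcongr
        · linarith
        · exact le_mul_of_one_le_right hθ.le hm
    _ = C * exp (θ * m) := mul_comm _ _

theorem one_div_mul_exp_bracket_lt {θ L N : ℝ} (hθ : 0 < θ) (hL : 0 ≤ L)
    (hLN : 2 * L + 2 ≤ N) :
    1 / θ * exp (-θ * (N - 2)) * ((L + 1 - 1 / θ) * exp (θ * L) + 1 / θ - 1) <
      1 / θ ^ 2 * exp (-θ * (L - 1)) + L / θ * exp (-θ * (N - L - 2)) := by
  have hAC_eq : exp (-θ * (N - 2)) * exp (θ * L) = exp (-θ * (N - L - 2)) := by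
    rw [← exp_add]; ring_nf
  have hCB_eq : exp (-θ * (N - L - 2)) * exp (θ * (N - 2 * L - 1)) = exp (-θ * (L - 1)) := by
    rw [← exp_add]; ring_nf
  set A := exp (-θ * (N - 2))
  set C := exp (-θ * (N - L - 2))
  have hAC : A ≤ C := by
    rw [← hAC_eq]
    exact le_mul_of_one_le_right (exp_pos _).le (one_le_exp (by positivity))
  have hgap : (θ - 1) * (C - A) < exp (-θ * (L - 1)) :=
    hCB_eq ▸ sub_one_mul_sub_lt_mul_exp hθ (exp_pos _) hAC (by linarith)
  have hgap_div : (θ - 1) * (C - A) / θ ^ 2 < 1 / θ ^ 2 * exp (-θ * (L - 1)) := by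
    rw [one_div_mul_eq_div]
    gcongr
  rw [one_div_mul_mul_bracket_eq hθ.ne', hAC_eq]
  linarith

/-- For `N > 9`, `L = ⌈N/3⌉` and `θ > 0`:
`M_{θ,N} < (1/θ²)e^(-θ(L-1)) + (L/θ)e^(-θ(N-L-2))`. -/
theorem M_theta_N_bound (N L : ℕ) (hN : 9 < N) (hL : L = (N + 2) / 3)
    (θ : ℝ) (hθ : 0 < θ) :
    1 / θ * Real.exp (-θ * ((N : ℝ) - 2)) *
        (((L : ℝ) + 1 - 1 / θ) * Real.exp (θ * L) + 1 / θ - 1) <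
      1 / θ ^ 2 * Real.exp (-θ * ((L : ℝ) - 1)) +
        (L : ℝ) / θ * Real.exp (-θ * ((N : ℝ) - (L : ℝ) - 2)) := by
  have hLN : 2 * L + 2 ≤ N := by omega
  exact one_div_mul_exp_bracket_lt hθ L.cast_nonneg (by exact_mod_cast hLN)
end

section
/- Let A, B be matrices of the same size with B = A + E and rank(A) = rank(B). Then ‖B⁺ − A⁺‖₂ ≤ ((1+√5)/2) ‖A⁺‖₂ ‖B⁺‖₂ ‖E‖₂, where ⁺ denotes the Moore–Penrose pseudoinverse and ‖·‖₂ the spectral norm. -/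
open Matrix
open scoped Matrix.Norms.L2Operator

/-- `P` is the Moore–Penrose pseudoinverse of `A`. -/
def IsMoorePenroseInv {m n : ℕ} (A : Matrix (Fin m) (Fin n) ℝ)
    (P : Matrix (Fin n) (Fin m) ℝ) : Prop :=
  A * P * A = A ∧ P * A * P = P ∧ (A * P)ᵀ = A * P ∧ (P * A)ᵀ = P * A

/-!
Write `P = AA⁺`, `P' = A⁺A`, `Q = BB⁺`, `Q' = B⁺B`; these are orthogonal projections, and
`rank A = rank B` makes the ranges of `P`, `Q` (and of `P'`, `Q'`) equidimensional. For two
orthogonal projections of equal rank, `‖(1 - P) Q‖ ≤ ‖(1 - Q) P‖`: if `s = ‖(1 - Q) P‖ < 1`,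
`Q` maps `range P` injectively, hence onto `range Q`, and for `v = Q u` with `u ∈ range P` one
has `‖v‖² = ⟪P v, u⟫` and `‖u‖² ≤ ‖v‖² + s²‖u‖²`, which forces `‖(1 - P) v‖ ≤ s ‖v‖`.
Since `(1 - Q) P = -(1 - Q) E A⁺` and `Q' (1 - P') = B⁺ E (1 - P')`, this bounds
`‖Q (1 - P)‖` and `‖(1 - Q') P'‖` by `‖E‖ ‖A⁺‖` and `‖B⁺‖ ‖E‖`.

In the block decomposition of `D = B⁺ - A⁺` along `P` (domain) and `Q'` (codomain) the block
`(1 - Q') D (1 - P)` vanishes and the other three are bounded by `γ = ‖A⁺‖ ‖B⁺‖ ‖E‖`. Hence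
`‖D x‖² ≤ γ² ((a + b)² + a²)` with `a = ‖P x‖`, `b = ‖(1 - P) x‖`, and the largest eigenvalue of
the quadratic form `(a + b)² + a²` on the unit circle is `φ²`.
-/

open Module
open scoped InnerProductSpace goldenRatio

section InnerProductSpace

variable {𝕜 E : Type*} [RCLike 𝕜] [NormedAddCommGroup E] [InnerProductSpace 𝕜 E]

namespace Submodule

theorem exists_starProjection_eq_of_finrank_eq {U V : Submodule 𝕜 E}
    [FiniteDimensional 𝕜 U] [FiniteDimensional 𝕜 V] (hUV : finrank 𝕜 U = finrank 𝕜 V)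
    (hinj : ∀ u ∈ U, V.starProjection u = 0 → u = 0) {v : E} (hv : v ∈ V) :
    ∃ u ∈ U, V.starProjection u = v := by
  let f : U →ₗ[𝕜] V := V.orthogonalProjectionOnto.toLinearMap ∘ₗ U.subtype
  have hf : Function.Injective f := by
    rw [← LinearMap.ker_eq_bot, LinearMap.ker_eq_bot']
    exact fun u hu => Subtype.ext (hinj u u.2 (congrArg Subtype.val hu))
  obtain ⟨u, hu⟩ := (LinearMap.injective_iff_surjective_of_finrank_eq_finrank hUV).mp hf ⟨v, hv⟩
  exact ⟨u, u.2, congrArg Subtype.val hu⟩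

theorem norm_sq_starProjection_le_of_mem {U V : Submodule 𝕜 E} [U.HasOrthogonalProjection]
    [V.HasOrthogonalProjection] {u : E} (hu : u ∈ U) :
    ‖V.starProjection u‖ ^ 2 ≤ ‖U.starProjection (V.starProjection u)‖ * ‖u‖ := by
  set v := V.starProjection u
  have : (‖v‖ ^ 2 : 𝕜) = ⟪U.starProjection v, u⟫_𝕜 := calc
    _ = ⟪v, V.starProjection u⟫_𝕜 := (inner_self_eq_norm_sq_to_K v).symm
    _ = ⟪V.starProjection v, u⟫_𝕜 := (inner_starProjection_left_eq_right V v u).symm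
    _ = ⟪v, U.starProjection u⟫_𝕜 := by
      rw [starProjection_eq_self_iff.mpr (V.starProjection_apply_mem u),
        starProjection_eq_self_iff.mpr hu]
    _ = ⟪U.starProjection v, u⟫_𝕜 := (inner_starProjection_left_eq_right U v u).symm
  calc ‖v‖ ^ 2 = ‖⟪U.starProjection v, u⟫_𝕜‖ := by rw [← this]; norm_cast; simp
    _ ≤ ‖U.starProjection v‖ * ‖u‖ := norm_inner_le_norm _ u

theorem norm_sub_starProjection_le_of_finrank_eq {U V : Submodule 𝕜 E}
    [FiniteDimensional 𝕜 U] [FiniteDimensional 𝕜 V] (hUV : finrank 𝕜 U = finrank 𝕜 V)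
    {s : ℝ} (hs₀ : 0 ≤ s) (hs : ∀ u ∈ U, ‖u - V.starProjection u‖ ≤ s * ‖u‖)
    {v : E} (hv : v ∈ V) : ‖v - U.starProjection v‖ ≤ s * ‖v‖ := by
  rcases le_or_gt 1 s with hs₁ | hs₁
  · calc ‖v - U.starProjection v‖ = ‖Uᗮ.starProjection v‖ := by simp
      _ ≤ ‖v‖ := norm_starProjection_apply_le _ v
      _ ≤ s * ‖v‖ := le_mul_of_one_le_left (norm_nonneg v) hs₁
  have hinj : ∀ u ∈ U, V.starProjection u = 0 → u = 0 := fun u hu h0 => by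
    have := hs u hu
    rw [h0, sub_zero] at this
    exact norm_le_zero_iff.mp (by nlinarith [norm_nonneg u])
  obtain ⟨u, hu, rfl⟩ := exists_starProjection_eq_of_finrank_eq hUV hinj hv
  set v := V.starProjection u
  set w := U.starProjection v
  have hpyth_u : ‖u‖ ^ 2 = ‖v‖ ^ 2 + ‖u - v‖ ^ 2 := by
    simpa using norm_sq_eq_add_norm_sq_starProjection u V
  have hpyth_v : ‖v‖ ^ 2 = ‖w‖ ^ 2 + ‖v - w‖ ^ 2 := by
    simpa using norm_sq_eq_add_norm_sq_starProjection v U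
  have hinner : ‖v‖ ^ 2 ≤ ‖w‖ * ‖u‖ := norm_sq_starProjection_le_of_mem hu
  have hdist : ‖u - v‖ ^ 2 ≤ s ^ 2 * ‖u‖ ^ 2 := by
    simpa [mul_pow] using pow_le_pow_left₀ (norm_nonneg _) (hs u hu) 2
  have hw : (1 - s ^ 2) * ‖v‖ ^ 2 ≤ ‖w‖ ^ 2 := by
    rcases (norm_nonneg v).eq_or_lt with hv0 | hv0
    · rw [← hv0]; simp
    have hu' : (1 - s ^ 2) * ‖u‖ ^ 2 ≤ ‖v‖ ^ 2 := by linarith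
    have hsq : (‖v‖ ^ 2) ^ 2 ≤ ‖w‖ ^ 2 * ‖u‖ ^ 2 := by
      rw [← mul_pow]; exact pow_le_pow_left₀ (by positivity) hinner 2
    have : (1 - s ^ 2) * ‖v‖ ^ 2 * ‖v‖ ^ 2 ≤ ‖w‖ ^ 2 * ‖v‖ ^ 2 := by
      nlinarith [mul_le_mul_of_nonneg_left hu' (sq_nonneg ‖w‖),
        mul_le_mul_of_nonneg_left hsq (by nlinarith : 0 ≤ 1 - s ^ 2)]
    exact le_of_mul_le_mul_right this (by positivity)
  exact pow_le_pow_iff_left₀ (norm_nonneg _) (by positivity) two_ne_zero |>.mp (by nlinarith)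

end Submodule

theorem IsStarProjection.norm_sq_apply_add_norm_sq_one_sub_apply [CompleteSpace E]
    {p : E →L[𝕜] E} (hp : IsStarProjection p) (x : E) :
    ‖p x‖ ^ 2 + ‖(1 - p) x‖ ^ 2 = ‖x‖ ^ 2 := by
  obtain ⟨K, _, rfl⟩ := isStarProjection_iff_eq_starProjection.mp hp
  rw [← K.starProjection_orthogonal', K.norm_sq_eq_add_norm_sq_starProjection x]

namespace ContinuousLinearMap

theorem norm_one_sub_mul_le_of_finrank_range_eq [CompleteSpace E] [FiniteDimensional 𝕜 E]
    {p q : E →L[𝕜] E} (hp : IsStarProjection p) (hq : IsStarProjection q)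
    (hpq : finrank 𝕜 p.range = finrank 𝕜 q.range) : ‖(1 - p) * q‖ ≤ ‖(1 - q) * p‖ := by
  obtain ⟨U, _, rfl⟩ := isStarProjection_iff_eq_starProjection.mp hp
  obtain ⟨V, _, rfl⟩ := isStarProjection_iff_eq_starProjection.mp hq
  rw [Submodule.range_starProjection, Submodule.range_starProjection] at hpq
  set s := ‖(1 - V.starProjection) * U.starProjection‖
  have hs (u) (hu : u ∈ U) : ‖u - V.starProjection u‖ ≤ s * ‖u‖ := by
    simpa [Submodule.starProjection_eq_self_iff.mpr hu] using
      ((1 - V.starProjection) * U.starProjection).le_opNorm u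
  refine opNorm_le_bound _ (norm_nonneg _) fun x => ?_
  calc ‖((1 - U.starProjection) * V.starProjection) x‖
      = ‖V.starProjection x - U.starProjection (V.starProjection x)‖ := by simp
    _ ≤ s * ‖V.starProjection x‖ :=
      Submodule.norm_sub_starProjection_le_of_finrank_eq hpq (norm_nonneg _) hs
        (V.starProjection_apply_mem x)
    _ ≤ s * ‖x‖ := by gcongr; exact V.norm_starProjection_apply_le x

end ContinuousLinearMap

theorem Real.add_sq_add_sq_le_goldenRatio_sq_mul (a b : ℝ) :
    (a + b) ^ 2 + a ^ 2 ≤ φ ^ 2 * (a ^ 2 + b ^ 2) := by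
  have key : φ * (φ ^ 2 * (a ^ 2 + b ^ 2) - ((a + b) ^ 2 + a ^ 2)) = (a - φ * b) ^ 2 := by
    linear_combination (φ * (a ^ 2 + b ^ 2) + a ^ 2) * Real.goldenRatio_sq
  have := (mul_nonneg_iff_of_pos_left Real.goldenRatio_pos).mp (key ▸ sq_nonneg _)
  linarith

namespace ContinuousLinearMap

variable {F : Type*} [NormedAddCommGroup F] [InnerProductSpace 𝕜 F] [CompleteSpace E]
  [CompleteSpace F]

theorem norm_le_goldenRatio_mul_of_blocks {p : E →L[𝕜] E} {q : F →L[𝕜] F}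
    (hp : IsStarProjection p) (hq : IsStarProjection q) {d : E →L[𝕜] F} {γ : ℝ}
    (h₀ : (1 - q) ∘L d ∘L (1 - p) = 0) (h₁ : ‖q ∘L d ∘L p‖ ≤ γ)
    (h₂ : ‖q ∘L d ∘L (1 - p)‖ ≤ γ) (h₃ : ‖(1 - q) ∘L d ∘L p‖ ≤ γ) : ‖d‖ ≤ φ * γ := by
  have hγ : 0 ≤ γ := (norm_nonneg _).trans h₁
  refine opNorm_le_bound _ (by positivity) fun x => ?_
  have hsplit (r : F →L[𝕜] F) :
      r (d x) = (r ∘L d ∘L p) (p x) + (r ∘L d ∘L (1 - p)) ((1 - p) x) := by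
    have h₁ : p (p x) = p x := congr($(hp.isIdempotentElem.eq) x)
    have h₂ : (1 - p) ((1 - p) x) = (1 - p) x := congr($(hp.one_sub.isIdempotentElem.eq) x)
    simp only [comp_apply, h₁, h₂, ← map_add]
    simp
  have hq_le : ‖q (d x)‖ ≤ γ * (‖p x‖ + ‖(1 - p) x‖) := by
    rw [hsplit, mul_add]
    exact (norm_add_le _ _).trans (add_le_add (le_of_opNorm_le _ h₁ _) (le_of_opNorm_le _ h₂ _))
  have hq'_le : ‖(1 - q) (d x)‖ ≤ γ * ‖p x‖ := by
    rw [hsplit, h₀, _root_.zero_apply, add_zero]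
    exact le_of_opNorm_le _ h₃ _
  refine (pow_le_pow_iff_left₀ (norm_nonneg _) (by positivity) two_ne_zero).mp ?_
  calc ‖d x‖ ^ 2 = ‖q (d x)‖ ^ 2 + ‖(1 - q) (d x)‖ ^ 2 :=
        (hq.norm_sq_apply_add_norm_sq_one_sub_apply (d x)).symm
    _ ≤ (γ * (‖p x‖ + ‖(1 - p) x‖)) ^ 2 + (γ * ‖p x‖) ^ 2 := by gcongr
    _ = γ ^ 2 * ((‖p x‖ + ‖(1 - p) x‖) ^ 2 + ‖p x‖ ^ 2) := by ring
    _ ≤ γ ^ 2 * (φ ^ 2 * (‖p x‖ ^ 2 + ‖(1 - p) x‖ ^ 2)) := by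
      gcongr; exact Real.add_sq_add_sq_le_goldenRatio_sq_mul _ _
    _ = (φ * γ * ‖x‖) ^ 2 := by rw [hp.norm_sq_apply_add_norm_sq_one_sub_apply x]; ring

end ContinuousLinearMap

end InnerProductSpace

theorem IsSelfAdjoint.norm_mul_comm {R : Type*} [NonUnitalNormedRing R] [StarRing R]
    [NormedStarGroup R] {a b : R} (ha : IsSelfAdjoint a) (hb : IsSelfAdjoint b) :
    ‖a * b‖ = ‖b * a‖ := by
  rw [← norm_star, star_mul, ha.star_eq, hb.star_eq]

namespace Matrix

variable {𝕜 : Type*} [RCLike 𝕜] {l m n p : Type*} [Fintype l] [Fintype m] [Fintype n]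
  [Fintype p] [DecidableEq m] [DecidableEq n]

theorem l2_opNorm_mul_mul_le [DecidableEq p] (X : Matrix l m 𝕜) (Y : Matrix m n 𝕜)
    (Z : Matrix n p 𝕜) :
    ‖X * Y * Z‖ ≤ ‖X‖ * ‖Y‖ * ‖Z‖ :=
  (l2_opNorm_mul _ _).trans (mul_le_mul_of_nonneg_right (l2_opNorm_mul _ _) (norm_nonneg _))

theorem toEuclideanLin_trans_toContinuousLinearMap_mul_mul (Q : Matrix n n 𝕜)
    (D : Matrix n m 𝕜) (P : Matrix m m 𝕜) :
    (toEuclideanLin.trans LinearMap.toContinuousLinearMap) (Q * D * P) =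
      toEuclideanCLM (𝕜 := 𝕜) Q ∘L (toEuclideanLin.trans LinearMap.toContinuousLinearMap) D ∘L
        toEuclideanCLM (𝕜 := 𝕜) P := by
  ext x : 1
  simp [toLpLin_apply, mulVec_mulVec]

theorem rank_eq_finrank_range_toEuclideanCLM (M : Matrix n n 𝕜) :
    M.rank = finrank 𝕜 (toEuclideanCLM (n := n) (𝕜 := 𝕜) M).range := by
  rw [rank_eq_finrank_range_toLin M (PiLp.basisFun 2 𝕜 n) (PiLp.basisFun 2 𝕜 n)]
  rfl

theorem l2_opNorm_one_sub_mul_le_of_rank_eq {P Q : Matrix n n 𝕜} (hP : IsStarProjection P)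
    (hQ : IsStarProjection Q) (hPQ : P.rank = Q.rank) : ‖(1 - P) * Q‖ ≤ ‖(1 - Q) * P‖ := by
  simpa only [← l2_opNorm_toEuclideanCLM, map_mul, map_sub, map_one] using
    ContinuousLinearMap.norm_one_sub_mul_le_of_finrank_range_eq (hP.map toEuclideanCLM)
      (hQ.map toEuclideanCLM) (by rwa [← rank_eq_finrank_range_toEuclideanCLM,
        ← rank_eq_finrank_range_toEuclideanCLM])

theorem l2_opNorm_le_goldenRatio_mul_of_blocks {P : Matrix m m 𝕜} {Q : Matrix n n 𝕜}
    (hP : IsStarProjection P) (hQ : IsStarProjection Q) {D : Matrix n m 𝕜} {γ : ℝ}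
    (h₀ : (1 - Q) * D * (1 - P) = 0) (h₁ : ‖Q * D * P‖ ≤ γ)
    (h₂ : ‖Q * D * (1 - P)‖ ≤ γ) (h₃ : ‖(1 - Q) * D * P‖ ≤ γ) : ‖D‖ ≤ φ * γ := by
  refine ContinuousLinearMap.norm_le_goldenRatio_mul_of_blocks
    (hP.map (toEuclideanCLM (𝕜 := 𝕜))) (hQ.map (toEuclideanCLM (𝕜 := 𝕜))) ?_ ?_ ?_ ?_
  all_goals simp only [← map_one (toEuclideanCLM (𝕜 := 𝕜)), ← map_sub,
    ← toEuclideanLin_trans_toContinuousLinearMap_mul_mul, ← l2_opNorm_def]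
  exacts [by rw [h₀, map_zero], h₁, h₂, h₃]

end Matrix

namespace IsMoorePenroseInv

variable {m n : ℕ} {A B : Matrix (Fin m) (Fin n) ℝ} {Ap Bp : Matrix (Fin n) (Fin m) ℝ}

theorem symm (h : IsMoorePenroseInv A Ap) : IsMoorePenroseInv Ap A :=
  ⟨h.2.1, h.1, h.2.2.2, h.2.2.1⟩

theorem isStarProjection_mul_inv (h : IsMoorePenroseInv A Ap) : IsStarProjection (A * Ap) where
  isIdempotentElem := by rw [IsIdempotentElem, ← Matrix.mul_assoc, h.1]
  isSelfAdjoint := by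
    rw [IsSelfAdjoint, star_eq_conjTranspose, conjTranspose_eq_transpose_of_trivial, h.2.2.1]

theorem isStarProjection_inv_mul (h : IsMoorePenroseInv A Ap) : IsStarProjection (Ap * A) :=
  h.symm.isStarProjection_mul_inv

theorem rank_mul_inv (h : IsMoorePenroseInv A Ap) : (A * Ap).rank = A.rank := by
  refine le_antisymm (rank_mul_le_left A Ap) ?_
  calc A.rank = (A * Ap * A).rank := by rw [h.1]
    _ ≤ (A * Ap).rank := rank_mul_le_left _ _

theorem rank_inv_mul (h : IsMoorePenroseInv A Ap) : (Ap * A).rank = A.rank := by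
  refine le_antisymm (rank_mul_le_right Ap A) ?_
  calc A.rank = (A * (Ap * A)).rank := by rw [← Matrix.mul_assoc, h.1]
    _ ≤ (Ap * A).rank := rank_mul_le_right _ _

theorem one_sub_mul_inv_mul (h : IsMoorePenroseInv A Ap) : (1 - A * Ap) * A = 0 := by
  rw [Matrix.sub_mul, Matrix.one_mul, h.1, sub_self]

theorem mul_one_sub_inv_mul (h : IsMoorePenroseInv A Ap) : A * (1 - Ap * A) = 0 := by
  rw [Matrix.mul_sub, Matrix.mul_one, ← Matrix.mul_assoc, h.1, sub_self]

theorem norm_mul_inv_mul_one_sub_le (hA : IsMoorePenroseInv A Ap) (hB : IsMoorePenroseInv B Bp)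
    (hAB : A.rank = B.rank) : ‖B * Bp * (1 - A * Ap)‖ ≤ ‖B - A‖ * ‖Ap‖ := by
  have hQ := hB.isStarProjection_mul_inv
  calc ‖B * Bp * (1 - A * Ap)‖ = ‖(1 - A * Ap) * (B * Bp)‖ :=
        hQ.isSelfAdjoint.norm_mul_comm hA.isStarProjection_mul_inv.one_sub.isSelfAdjoint
    _ ≤ ‖(1 - B * Bp) * (A * Ap)‖ :=
        l2_opNorm_one_sub_mul_le_of_rank_eq hA.isStarProjection_mul_inv hQ
          (by rw [hA.rank_mul_inv, hB.rank_mul_inv, hAB])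
    _ = ‖(1 - B * Bp) * (A - B) * Ap‖ := by
        rw [Matrix.mul_sub (1 - B * Bp) A B, hB.one_sub_mul_inv_mul, sub_zero, Matrix.mul_assoc]
    _ ≤ ‖1 - B * Bp‖ * ‖A - B‖ * ‖Ap‖ := l2_opNorm_mul_mul_le _ _ _
    _ ≤ ‖B - A‖ * ‖Ap‖ := by
        rw [norm_sub_rev A B]
        gcongr
        exact mul_le_of_le_one_left (norm_nonneg _) hQ.one_sub.norm_le

theorem norm_one_sub_inv_mul_mul_le (hA : IsMoorePenroseInv A Ap) (hB : IsMoorePenroseInv B Bp)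
    (hAB : A.rank = B.rank) : ‖(1 - Bp * B) * (Ap * A)‖ ≤ ‖Bp‖ * ‖B - A‖ := by
  have hP' := hA.isStarProjection_inv_mul
  calc ‖(1 - Bp * B) * (Ap * A)‖ ≤ ‖(1 - Ap * A) * (Bp * B)‖ :=
        l2_opNorm_one_sub_mul_le_of_rank_eq hB.isStarProjection_inv_mul hP'
          (by rw [hA.rank_inv_mul, hB.rank_inv_mul, hAB])
    _ = ‖Bp * B * (1 - Ap * A)‖ :=
        hP'.one_sub.isSelfAdjoint.norm_mul_comm hB.isStarProjection_inv_mul.isSelfAdjoint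
    _ = ‖Bp * (B - A) * (1 - Ap * A)‖ := by
        rw [Matrix.mul_sub Bp, Matrix.sub_mul, Matrix.mul_assoc Bp A, hA.mul_one_sub_inv_mul,
          Matrix.mul_zero, sub_zero]
    _ ≤ ‖Bp‖ * ‖B - A‖ * ‖1 - Ap * A‖ := l2_opNorm_mul_mul_le _ _ _
    _ ≤ ‖Bp‖ * ‖B - A‖ := mul_le_of_le_one_right (by positivity) hP'.one_sub.norm_le

theorem norm_sub_le_goldenRatio_mul (hA : IsMoorePenroseInv A Ap)
    (hB : IsMoorePenroseInv B Bp) (hAB : A.rank = B.rank) :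
    ‖Bp - Ap‖ ≤ φ * (‖Ap‖ * ‖Bp‖ * ‖B - A‖) := by
  refine l2_opNorm_le_goldenRatio_mul_of_blocks hA.isStarProjection_mul_inv
    hB.isStarProjection_inv_mul ?_ ?_ ?_ ?_
  · rw [Matrix.mul_sub (1 - Bp * B) Bp Ap, hB.symm.one_sub_mul_inv_mul, zero_sub,
      Matrix.neg_mul, Matrix.mul_assoc, hA.symm.mul_one_sub_inv_mul, Matrix.mul_zero, neg_zero]
  · calc ‖Bp * B * (Bp - Ap) * (A * Ap)‖
        = ‖Bp * B * Bp * (A * Ap) - Bp * B * (Ap * A * Ap)‖ := by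
          simp only [Matrix.mul_sub, Matrix.sub_mul, Matrix.mul_assoc]
      _ = ‖Bp * (B - A) * Ap‖ := by
          rw [hB.2.1, hA.2.1, norm_sub_rev]
          simp only [Matrix.mul_sub, Matrix.sub_mul, Matrix.mul_assoc]
      _ ≤ ‖Bp‖ * ‖B - A‖ * ‖Ap‖ := l2_opNorm_mul_mul_le _ _ _
      _ = _ := by ring
  · calc ‖Bp * B * (Bp - Ap) * (1 - A * Ap)‖
        = ‖Bp * B * Bp * (1 - A * Ap) - Bp * B * (Ap * (1 - A * Ap))‖ := by
          congr 1; simp only [Matrix.mul_sub, Matrix.sub_mul, Matrix.mul_assoc]; abel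
      _ = ‖Bp * (B * Bp * (1 - A * Ap))‖ := by
          rw [hA.symm.mul_one_sub_inv_mul, Matrix.mul_zero, sub_zero]
          simp only [Matrix.mul_assoc]
      _ ≤ ‖Bp‖ * (‖B - A‖ * ‖Ap‖) :=
          (l2_opNorm_mul _ _).trans (by gcongr; exact hA.norm_mul_inv_mul_one_sub_le hB hAB)
      _ = _ := by ring
  · calc ‖(1 - Bp * B) * (Bp - Ap) * (A * Ap)‖ = ‖(1 - Bp * B) * (Ap * A) * Ap‖ := by
          rw [Matrix.mul_sub (1 - Bp * B) Bp Ap, hB.symm.one_sub_mul_inv_mul, zero_sub,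
            Matrix.neg_mul, norm_neg]
          simp only [Matrix.mul_assoc]
      _ ≤ ‖(1 - Bp * B) * (Ap * A)‖ * ‖Ap‖ := l2_opNorm_mul _ _
      _ ≤ ‖Bp‖ * ‖B - A‖ * ‖Ap‖ := by gcongr; exact hA.norm_one_sub_inv_mul_mul_le hB hAB
      _ = _ := by ring

end IsMoorePenroseInv

/-- Stewart's perturbation bound for the Moore–Penrose pseudoinverse:
if `B = A + E` and `rank A = rank B`, then
`‖B⁺ − A⁺‖₂ ≤ ((1+√5)/2) ‖A⁺‖₂ ‖B⁺‖₂ ‖E‖₂`. -/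
theorem pseudoinverse_perturbation_bound {m n : ℕ}
    (A B E : Matrix (Fin m) (Fin n) ℝ)
    (Ap Bp : Matrix (Fin n) (Fin m) ℝ)
    (hA : IsMoorePenroseInv A Ap) (hB : IsMoorePenroseInv B Bp)
    (hE : B = A + E) (hrank : A.rank = B.rank) :
    ‖Bp - Ap‖ ≤ (1 + Real.sqrt 5) / 2 * ‖Ap‖ * ‖Bp‖ * ‖E‖ := by
  calc ‖Bp - Ap‖ ≤ φ * (‖Ap‖ * ‖Bp‖ * ‖B - A‖) := hA.norm_sub_le_goldenRatio_mul hB hrank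
    _ = (1 + Real.sqrt 5) / 2 * ‖Ap‖ * ‖Bp‖ * ‖E‖ := by
      rw [hE, add_sub_cancel_left, Real.goldenRatio]; ring
end

section
/- Let A, E be matrices of the same size with rank(A+E) = rank(A) and ‖E‖₂ < 1/‖A⁺‖₂. Then ‖(A+E)⁺‖₂ ≤ ‖A⁺‖₂ / (1 − ‖A⁺‖₂ ‖E‖₂). -/
/-!
On `S = range (A⁺ A)` we have `‖u‖ ≤ ‖A⁺‖ ‖A u‖`, so `B = A + E` satisfies `‖B u‖ ≥ c ‖u‖`
there, with `c = ‖A⁺‖⁻¹ - ‖E‖ > 0`. Hence `B` is injective on `S`, and as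
`dim S = rank A = rank B`, it maps `S` onto `range B`. Given `y`, write `B B⁺ y = B u` with
`u ∈ S`; since `B⁺ B` and `B B⁺` are orthogonal projections,
`‖B⁺ y‖ = ‖B⁺ B u‖ ≤ ‖u‖ ≤ ‖B u‖ / c = ‖B B⁺ y‖ / c ≤ ‖y‖ / c`.
-/

open Matrix
open scoped Matrix.Norms.L2Operator

open Module

namespace ContinuousLinearMap

variable {𝕜 E F : Type*} [NontriviallyNormedField 𝕜] [NormedAddCommGroup E] [NormedSpace 𝕜 E]
  [NormedAddCommGroup F] [NormedSpace 𝕜 F]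

theorem norm_le_mul_norm_apply_of_mem_range_comp {f : E →L[𝕜] F} {g : F →L[𝕜] E}
    (hfgf : f ∘L g ∘L f = f) {u : E} (hu : u ∈ LinearMap.range (g ∘L f).toLinearMap) :
    ‖u‖ ≤ ‖g‖ * ‖f u‖ := by
  obtain ⟨w, rfl⟩ := hu
  calc ‖(g ∘L f) w‖ = ‖g (f ((g ∘L f) w))‖ := by
        rw [← comp_apply f, hfgf, comp_apply]
    _ ≤ ‖g‖ * ‖f ((g ∘L f) w)‖ := le_opNorm g _

theorem inv_norm_sub_norm_mul_le_norm_add_apply {f e : E →L[𝕜] F} {g : F →L[𝕜] E}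
    (hfgf : f ∘L g ∘L f = f) {u : E} (hu : u ∈ LinearMap.range (g ∘L f).toLinearMap) :
    (‖g‖⁻¹ - ‖e‖) * ‖u‖ ≤ ‖(f + e) u‖ := by
  have hfu : ‖g‖⁻¹ * ‖u‖ ≤ ‖f u‖ := by
    rcases (norm_nonneg g).eq_or_lt with hg | hg
    · simp [← hg]
    · rw [inv_mul_le_iff₀ hg]
      exact norm_le_mul_norm_apply_of_mem_range_comp hfgf hu
  have heu : ‖e u‖ ≤ ‖e‖ * ‖u‖ := le_opNorm e u
  have htri : ‖f u‖ ≤ ‖(f + e) u‖ + ‖e u‖ := by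
    simpa using norm_sub_le ((f + e) u) (e u)
  linarith

theorem map_eq_range_of_mul_norm_le_norm_apply [FiniteDimensional 𝕜 E] {b : E →L[𝕜] F}
    {S : Submodule 𝕜 E} {c : ℝ} (hc : 0 < c) (hS : ∀ u ∈ S, c * ‖u‖ ≤ ‖b u‖)
    (hrank : finrank 𝕜 (LinearMap.range b.toLinearMap) ≤ finrank 𝕜 S) :
    S.map b.toLinearMap = LinearMap.range b.toLinearMap := by
  have hinj : Function.Injective (b.toLinearMap.domRestrict S) := by
    refine (injective_iff_map_eq_zero _).2 fun ⟨u, hu⟩ hzero => ?_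
    have hbu : b u = 0 := hzero
    have : c * ‖u‖ ≤ 0 := by simpa [hbu] using hS u hu
    simpa [Submodule.mk_eq_zero, norm_le_zero_iff] using
      (nonpos_of_mul_nonpos_right this hc : ‖u‖ ≤ 0)
  refine Submodule.eq_of_le_of_finrank_le (LinearMap.map_le_range) ?_
  rwa [← LinearMap.range_domRestrict, LinearMap.finrank_range_of_inj hinj]

theorem norm_le_inv_of_mul_norm_le_norm_apply [FiniteDimensional 𝕜 E] {b : E →L[𝕜] F}
    {h : F →L[𝕜] E} (hhbh : h ∘L b ∘L h = h) (hhb : ‖h ∘L b‖ ≤ 1) (hbh : ‖b ∘L h‖ ≤ 1)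
    {S : Submodule 𝕜 E} {c : ℝ} (hc : 0 < c) (hS : ∀ u ∈ S, c * ‖u‖ ≤ ‖b u‖)
    (hrank : finrank 𝕜 (LinearMap.range b.toLinearMap) ≤ finrank 𝕜 S) :
    ‖h‖ ≤ c⁻¹ := by
  refine opNorm_le_bound _ (inv_nonneg.2 hc.le) fun y => ?_
  obtain ⟨u, hu, hbu⟩ : b (h y) ∈ S.map b.toLinearMap := by
    rw [map_eq_range_of_mul_norm_le_norm_apply hc hS hrank]
    exact LinearMap.mem_range_self _ _
  have hbu : b u = (b ∘L h) y := hbu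
  calc ‖h y‖ = ‖(h ∘L b) u‖ := by rw [comp_apply, hbu, ← comp_apply h, hhbh]
    _ ≤ ‖u‖ := (le_opNorm _ u).trans (mul_le_of_le_one_left (norm_nonneg u) hhb)
    _ ≤ c⁻¹ * ‖(b ∘L h) y‖ := by rw [← hbu, le_inv_mul_iff₀ hc]; exact hS u hu
    _ ≤ c⁻¹ * ‖y‖ := by
      gcongr
      exact (le_opNorm _ y).trans (mul_le_of_le_one_left (norm_nonneg y) hbh)

theorem finrank_range_le_finrank_range_comp [FiniteDimensional 𝕜 E] {f : E →L[𝕜] F}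
    {g : F →L[𝕜] E} (hfgf : f ∘L g ∘L f = f) :
    finrank 𝕜 (LinearMap.range f.toLinearMap) ≤
      finrank 𝕜 (LinearMap.range (g ∘L f).toLinearMap) := by
  conv_lhs => rw [← hfgf, toLinearMap_comp, LinearMap.range_comp]
  exact Submodule.finrank_map_le _ _

theorem norm_le_div_of_finrank_range_add_eq [FiniteDimensional 𝕜 E] {f e : E →L[𝕜] F}
    {g h : F →L[𝕜] E} (hfgf : f ∘L g ∘L f = f) (hhbh : h ∘L (f + e) ∘L h = h)
    (hhb : ‖h ∘L (f + e)‖ ≤ 1) (hbh : ‖(f + e) ∘L h‖ ≤ 1)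
    (hrank : finrank 𝕜 (LinearMap.range (f + e).toLinearMap) =
      finrank 𝕜 (LinearMap.range f.toLinearMap))
    (he : ‖e‖ < ‖g‖⁻¹) :
    ‖h‖ ≤ ‖g‖ / (1 - ‖g‖ * ‖e‖) := by
  have hg : 0 < ‖g‖ := inv_pos.1 ((norm_nonneg e).trans_lt he)
  have hc : 0 < ‖g‖⁻¹ - ‖e‖ := sub_pos.2 he
  have key := norm_le_inv_of_mul_norm_le_norm_apply hhbh hhb hbh hc
    (fun u hu => inv_norm_sub_norm_mul_le_norm_add_apply hfgf hu)
    (hrank.trans_le (finrank_range_le_finrank_range_comp hfgf))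
  calc ‖h‖ ≤ (‖g‖⁻¹ - ‖e‖)⁻¹ := key
    _ = ‖g‖ / (1 - ‖g‖ * ‖e‖) := by field_simp

end ContinuousLinearMap

namespace Matrix

variable {𝕜 : Type*} [RCLike 𝕜] {l m n : Type*} [Fintype l] [Fintype m] [Fintype n]
  [DecidableEq n]

noncomputable def toL2OpCLM :
    Matrix m n 𝕜 ≃ₗ[𝕜] (EuclideanSpace 𝕜 n →L[𝕜] EuclideanSpace 𝕜 m) :=
  toEuclideanLin.trans LinearMap.toContinuousLinearMap

@[simp]
theorem norm_toL2OpCLM (A : Matrix m n 𝕜) : ‖toL2OpCLM A‖ = ‖A‖ := rfl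

theorem toL2OpCLM_mul [DecidableEq m] (A : Matrix l m 𝕜) (B : Matrix m n 𝕜) :
    toL2OpCLM (A * B) = toL2OpCLM A ∘L toL2OpCLM B := by
  ext1 x
  exact congr($(toLpLin_mul_same 2 A B) x)

theorem finrank_range_toL2OpCLM (A : Matrix m n 𝕜) :
    finrank 𝕜 (LinearMap.range (toL2OpCLM A).toLinearMap) = A.rank := by
  rw [A.rank_eq_finrank_range_toLin (EuclideanSpace.basisFun m 𝕜).toBasis
    (EuclideanSpace.basisFun n 𝕜).toBasis, ← toEuclideanLin_eq_toLin_orthonormal]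
  rfl

theorem l2_opNorm_le_one_of_conjTranspose_eq_of_mul_self_eq {P : Matrix n n 𝕜} (hP : Pᴴ = P)
    (hPP : P * P = P) : ‖P‖ ≤ 1 :=
  IsStarProjection.norm_le P ⟨hPP, hP⟩

end Matrix

theorem IsMoorePenroseInv.norm_mul_inv_le_one {m n : ℕ} {A : Matrix (Fin m) (Fin n) ℝ}
    {P : Matrix (Fin n) (Fin m) ℝ} (h : IsMoorePenroseInv A P) : ‖A * P‖ ≤ 1 := by
  refine l2_opNorm_le_one_of_conjTranspose_eq_of_mul_self_eq ?_ ?_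
  · rw [conjTranspose_eq_transpose_of_trivial, h.2.2.1]
  · rw [← Matrix.mul_assoc, h.1]

theorem IsMoorePenroseInv.norm_inv_mul_le_one {m n : ℕ} {A : Matrix (Fin m) (Fin n) ℝ}
    {P : Matrix (Fin n) (Fin m) ℝ} (h : IsMoorePenroseInv A P) : ‖P * A‖ ≤ 1 := by
  refine l2_opNorm_le_one_of_conjTranspose_eq_of_mul_self_eq ?_ ?_
  · rw [conjTranspose_eq_transpose_of_trivial, h.2.2.2]
  · rw [← Matrix.mul_assoc, h.2.1]

/-- Wedin's bound: if `rank (A+E) = rank A` and `‖E‖₂ < 1/‖A⁺‖₂`, then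
`‖(A+E)⁺‖₂ ≤ ‖A⁺‖₂/(1 − ‖A⁺‖₂‖E‖₂)`. -/
theorem wedin_pseudoinverse_bound {m n : ℕ}
    (A E : Matrix (Fin m) (Fin n) ℝ)
    (Ap Bp : Matrix (Fin n) (Fin m) ℝ)
    (hA : IsMoorePenroseInv A Ap) (hB : IsMoorePenroseInv (A + E) Bp)
    (hrank : (A + E).rank = A.rank)
    (hE : ‖E‖ < 1 / ‖Ap‖) :
    ‖Bp‖ ≤ ‖Ap‖ / (1 - ‖Ap‖ * ‖E‖) := by
  have hE' : ‖toL2OpCLM E‖ < ‖toL2OpCLM Ap‖⁻¹ := by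
    simpa only [norm_toL2OpCLM, one_div] using hE
  have hAApA : toL2OpCLM A ∘L toL2OpCLM Ap ∘L toL2OpCLM A = toL2OpCLM A := by
    rw [← toL2OpCLM_mul, ← toL2OpCLM_mul, ← Matrix.mul_assoc, hA.1]
  have hBpBBp : toL2OpCLM Bp ∘L toL2OpCLM (A + E) ∘L toL2OpCLM Bp = toL2OpCLM Bp := by
    rw [← toL2OpCLM_mul, ← toL2OpCLM_mul, ← Matrix.mul_assoc, hB.2.1]
  have hrank' : finrank ℝ (LinearMap.range (toL2OpCLM (A + E)).toLinearMap) =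
      finrank ℝ (LinearMap.range (toL2OpCLM A).toLinearMap) := by
    rw [finrank_range_toL2OpCLM, finrank_range_toL2OpCLM, hrank]
  have hBpB_le : ‖toL2OpCLM Bp ∘L toL2OpCLM (A + E)‖ ≤ 1 := by
    rw [← toL2OpCLM_mul]; exact hB.norm_inv_mul_le_one
  have hBBp_le : ‖toL2OpCLM (A + E) ∘L toL2OpCLM Bp‖ ≤ 1 := by
    rw [← toL2OpCLM_mul]; exact hB.norm_mul_inv_le_one
  rw [map_add] at hBpBBp hBpB_le hBBp_le hrank'
  simpa only [norm_toL2OpCLM] using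
    ContinuousLinearMap.norm_le_div_of_finrank_range_add_eq hAApA hBpBBp hBpB_le hBBp_le
      hrank' hE'
end

section
/- Let A be a diagonalizable n×n matrix, A = X Λ X^{-1} with Λ diagonal, and let à be any n×n matrix. Then for every eigenvalue λ̃ of Ã, there exists an eigenvalue λ of A with |λ̃ − λ| ≤ κ(X) ‖à − A‖₂, where κ(X) = ‖X‖₂ ‖X^{-1}‖₂. -/
open Matrix
open scoped Matrix.Norms.L2Operator

/-!
Conjugating by `X` turns `Ã` into `diagonal d + F` with `F = X⁻¹ (Ã - A) X`, which has the same
spectrum as `Ã` and satisfies `‖F‖ ≤ κ(X) ‖Ã - A‖`. If `v` is an eigenvector of `diagonal d + F`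
for `μ`, then `(μ - d j) v j = (F v) j` for every `j`, so
`min_j |μ - d j| ‖v‖ ≤ ‖F v‖ ≤ ‖F‖ ‖v‖`.
-/

variable {𝕜 ι : Type*} [RCLike 𝕜] [Fintype ι]

lemma EuclideanSpace.mul_norm_le_norm_of_forall {c : ℝ} {x y : EuclideanSpace 𝕜 ι}
    (h : ∀ i, c * ‖x i‖ ≤ ‖y i‖) : c * ‖x‖ ≤ ‖y‖ := by
  obtain hc | hc := lt_or_ge c 0
  · exact (mul_nonpos_of_nonpos_of_nonneg hc.le (norm_nonneg x)).trans (norm_nonneg y)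
  refine (sq_le_sq₀ (by positivity) (norm_nonneg y)).mp ?_
  rw [mul_pow, EuclideanSpace.norm_sq_eq, EuclideanSpace.norm_sq_eq, Finset.mul_sum]
  gcongr with i
  rw [← mul_pow]
  exact pow_le_pow_left₀ (by positivity) (h i) 2

namespace Matrix

variable [DecidableEq ι]

lemma spectrum_mul_mul_nonsing_inv {R : Type*} [CommRing R] {X : Matrix ι ι R}
    (hX : IsUnit X.det) (M : Matrix ι ι R) : spectrum R (X * M * X⁻¹) = spectrum R M := by
  obtain ⟨U, rfl⟩ := (isUnit_iff_isUnit_det X).mpr hX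
  rw [← coe_units_inv, spectrum.units_conjugate]

lemma spectrum_nonsing_inv_mul_mul {R : Type*} [CommRing R] {X : Matrix ι ι R}
    (hX : IsUnit X.det) (M : Matrix ι ι R) : spectrum R (X⁻¹ * M * X) = spectrum R M := by
  obtain ⟨U, rfl⟩ := (isUnit_iff_isUnit_det X).mpr hX
  rw [← coe_units_inv, spectrum.units_conjugate']

lemma exists_mulVec_eq_smul_of_mem_spectrum {K : Type*} [Field K] {M : Matrix ι ι K} {μ : K}
    (hμ : μ ∈ spectrum K M) : ∃ v ≠ 0, M *ᵥ v = μ • v := by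
  rw [← spectrum_toLin', ← Module.End.hasEigenvalue_iff_mem_spectrum] at hμ
  obtain ⟨v, hv⟩ := hμ.exists_hasEigenvector
  exact ⟨v, hv.2, by simpa using hv.apply_eq_smul⟩

theorem exists_norm_sub_le_of_mem_spectrum_diagonal_add (d : ι → 𝕜) (F : Matrix ι ι 𝕜) {μ : 𝕜}
    (hμ : μ ∈ spectrum 𝕜 (diagonal d + F)) : ∃ i, ‖μ - d i‖ ≤ ‖F‖ := by
  obtain ⟨v, hv0, hv⟩ := exists_mulVec_eq_smul_of_mem_spectrum hμ
  have : Nonempty ι := not_isEmpty_iff.mp fun _ => hv0 (Subsingleton.elim _ _)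
  obtain ⟨i, hi⟩ := Finite.exists_min fun j => ‖μ - d j‖
  have hFv : ∀ j, (F *ᵥ v) j = (μ - d j) * v j := fun j => by
    have := congrFun hv j
    simp only [add_mulVec, mulVec_diagonal, Pi.add_apply, Pi.smul_apply, smul_eq_mul] at this
    linear_combination this
  have hv_pos : 0 < ‖WithLp.toLp 2 v‖ := by simpa using hv0
  refine ⟨i, le_of_mul_le_mul_right ?_ hv_pos⟩
  calc ‖μ - d i‖ * ‖WithLp.toLp 2 v‖ ≤ ‖WithLp.toLp 2 (F *ᵥ v)‖ :=
        EuclideanSpace.mul_norm_le_norm_of_forall fun j => by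
          simp only [hFv, norm_mul]
          gcongr
          exact hi j
    _ ≤ ‖F‖ * ‖WithLp.toLp 2 v‖ := l2_opNorm_mulVec F _

end Matrix

/-- Bauer–Fike theorem: if `A = X Λ X⁻¹` is diagonalizable, then every eigenvalue
`μ` of `Ã` is within `κ(X)‖Ã − A‖₂` of some eigenvalue of `A`. -/
theorem bauer_fike {n : ℕ} (A Atilde X : Matrix (Fin n) (Fin n) ℂ)
    (d : Fin n → ℂ) (hX : IsUnit X.det)
    (hA : A = X * Matrix.diagonal d * X⁻¹)
    (μ : ℂ) (hμ : μ ∈ spectrum ℂ Atilde) :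
    ∃ lam ∈ spectrum ℂ A,
      ‖μ - lam‖ ≤ ‖X‖ * ‖X⁻¹‖ * ‖Atilde - A‖ := by
  have hconj : X⁻¹ * Atilde * X = diagonal d + X⁻¹ * (Atilde - A) * X := by
    rw [hA]
    simp only [mul_sub, sub_mul, mul_assoc, nonsing_inv_mul X hX, mul_one]
    simp only [← mul_assoc, nonsing_inv_mul X hX, one_mul]
    abel
  rw [← spectrum_nonsing_inv_mul_mul hX, hconj] at hμ
  obtain ⟨i, hi⟩ := exists_norm_sub_le_of_mem_spectrum_diagonal_add d _ hμ
  refine ⟨d i, by simp [hA, spectrum_mul_mul_nonsing_inv hX], hi.trans ?_⟩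
  calc ‖X⁻¹ * (Atilde - A) * X‖ ≤ ‖X⁻¹‖ * ‖Atilde - A‖ * ‖X‖ :=
        (l2_opNorm_mul _ _).trans (by gcongr; exact l2_opNorm_mul _ _)
    _ = ‖X‖ * ‖X⁻¹‖ * ‖Atilde - A‖ := by ring
end
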